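/- arXiv:2302.09842 — 9 statements merged into one kernel-verified Lean document; each statement's English description precedes it below -/
import Mathlib

section
/- For every integer n ≥ 1 and every integer a with 0 ≤ a ≤ n, the binary Varshamov–Tenengolts code VT_a(n) = {c ∈ Σ_2^n : Σ_{i=1}^n i·c_i ≡ a (mod n+1)} is a single-absorption correcting code; that is, for any two distinct codewords c, c′ ∈ VT_a(n), the 1-absorption balls B_1^{ab}(c) and B_1^{ab}(c′) are disjoint. -/
/-- `a ⊕ b = min(a+b, q-1)` over the alphabet `Σ_q = {0,…,q-1}`. -/
def vplus (q a b : ℕ) : ℕ := min (a + b) (q - 1)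

/-- `y` is obtained from `x` by a single absorption: either two adjacent symbols
`a b` are replaced by `a ⊕ b`, or the last symbol is missing. -/
def absorb1 (q : ℕ) (x y : List ℕ) : Prop :=
  (∃ u v a b, x = u ++ a :: b :: v ∧ y = u ++ vplus q a b :: v) ∨ y = x.dropLast

/-- The `1`-absorption ball `B_1^{ab}(x)`. -/
def ball1 (q : ℕ) (x : List ℕ) : Set (List ℕ) := {y | absorb1 q x y}

/-- The VT syndrome `Syn(z) = Σ_{i=1}^{|z|} i·z_i` (positions are 1-indexed). -/
def syn (z : List ℕ) : ℕ := ∑ i ∈ Finset.range z.length, (i + 1) * z.getD i 0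

lemma syn_nil : syn [] = 0 := rfl

lemma sum_getD (l : List ℕ) : ∑ i ∈ Finset.range l.length, l.getD i 0 = l.sum := by
  induction l with
  | nil => simp
  | cons a l ih =>
    rw [List.length_cons, Finset.sum_range_succ']
    simp only [List.getD_cons_succ, List.getD_cons_zero, List.sum_cons, ih]
    omega

lemma syn_cons (a : ℕ) (l : List ℕ) : syn (a :: l) = a + syn l + l.sum := by
  unfold syn
  rw [List.length_cons, Finset.sum_range_succ']
  simp only [List.getD_cons_succ, List.getD_cons_zero]
  have : ∀ i ∈ Finset.range l.length, (i + 1 + 1) * l.getD i 0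
      = (i + 1) * l.getD i 0 + l.getD i 0 := by intro i _; ring
  rw [Finset.sum_congr rfl this, Finset.sum_add_distrib, sum_getD]
  omega

lemma syn_append (u v : List ℕ) : syn (u ++ v) = syn u + syn v + u.length * v.sum := by
  induction u with
  | nil => simp [syn_nil]
  | cons a u ih =>
    simp only [List.cons_append, syn_cons, ih, List.sum_append, List.length_cons]
    ring

lemma sum_le_length (l : List ℕ) (h : ∀ b ∈ l, b < 2) : l.sum ≤ l.length := by
  induction l with
  | nil => simp
  | cons a l ih =>
    simp only [List.sum_cons, List.length_cons]
    have := h a (by simp)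
    have := ih (fun b hb => h b (by simp [hb]))
    omega

lemma all_one (l : List ℕ) (h : ∀ b ∈ l, b < 2) (hs : l.sum = l.length) :
    ∀ b ∈ l, b = 1 := by
  induction l with
  | nil => simp
  | cons a l ih =>
    have ha := h a (by simp)
    have hl : ∀ b ∈ l, b < 2 := fun b hb => h b (by simp [hb])
    have := sum_le_length l hl
    simp only [List.sum_cons, List.length_cons] at hs
    intro b hb
    rcases List.mem_cons.1 hb with rfl | hb
    · omega
    · exact ih hl (by omega) b hb

lemma all_zero (l : List ℕ) (hs : l.sum = 0) : ∀ b ∈ l, b = 0 := by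
  induction l with
  | nil => simp
  | cons a l ih =>
    simp only [List.sum_cons] at hs
    intro b hb
    rcases List.mem_cons.1 hb with rfl | hb
    · omega
    · exact ih (by omega) b hb

/-- Inserting the same symbol anywhere into a run gives the same list. -/
lemma insert_run (y : List ℕ) (a i j : ℕ) (hij : i ≤ j) (hj : j ≤ y.length)
    (h : ∀ p, i ≤ p → p < j → y.getD p 0 = a) :
    y.take i ++ a :: y.drop i = y.take j ++ a :: y.drop j := by
  induction j, hij using Nat.le_induction with
  | base => rfl
  | succ k hk ih =>
    have hky : k < y.length := by omega
    have step : y.take k ++ a :: y.drop k = y.take (k+1) ++ a :: y.drop (k+1) := by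
      have h1 : y.drop k = y[k] :: y.drop (k+1) := List.drop_eq_getElem_cons hky
      have h2 : y.take (k+1) = y.take k ++ [y[k]] := by
        rw [List.take_succ, List.getElem?_eq_getElem hky]; rfl
      have h3 : y[k] = a := by
        have := h k hk (by omega)
        rwa [List.getD_eq_getElem y 0 hky] at this
      rw [h1, h2, h3]
      simp
    rw [ih (by omega) (fun p hp hp' => h p hp (by omega)), step]

lemma syn_ins (y : List ℕ) (a i : ℕ) (hi : i ≤ y.length) :
    syn (y.take i ++ a :: y.drop i) = syn y + (i + 1) * a + (y.drop i).sum := by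
  have hlen : (y.take i).length = i := by
    rw [List.length_take]; omega
  have hy : syn y = syn (y.take i) + syn (y.drop i) + i * (y.drop i).sum := by
    conv_lhs => rw [← List.take_append_drop i y]
    rw [syn_append, hlen]
  rw [syn_append, syn_cons, hlen, hy, List.sum_cons]
  ring

/-- Core VT argument: if inserting `ai` at `i` and `aj` at `j ≥ i` into `y` give
words with the same syndrome mod `|y|+2`, the words are equal. -/
lemma vt_core (y : List ℕ) (i j ai aj : ℕ) (hi : i ≤ y.length) (hj : j ≤ y.length)
    (hij : i ≤ j) (hai : ai < 2) (haj : aj < 2) (hyb : ∀ b ∈ y, b < 2)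
    (hcong : syn (y.take i ++ ai :: y.drop i)
        ≡ syn (y.take j ++ aj :: y.drop j) [MOD y.length + 2]) :
    y.take i ++ ai :: y.drop i = y.take j ++ aj :: y.drop j := by
  set M := y.length + 2 with hM
  have hdi : ∀ b ∈ y.drop i, b < 2 := fun b hb => hyb b (List.drop_subset _ _ hb)
  have hdj : ∀ b ∈ y.drop j, b < 2 := fun b hb => hyb b (List.drop_subset _ _ hb)
  have hsi : (y.drop i).sum ≤ y.length - i := by
    have := sum_le_length _ hdi; rwa [List.length_drop] at this
  have hsj : (y.drop j).sum ≤ y.length - j := by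
    have := sum_le_length _ hdj; rwa [List.length_drop] at this
  rw [syn_ins y ai i hi, syn_ins y aj j hj] at hcong
  have hAB : (i + 1) * ai + (y.drop i).sum ≡ (j + 1) * aj + (y.drop j).sum [MOD M] := by
    have h := hcong
    rw [add_assoc, add_assoc] at h
    exact Nat.ModEq.add_left_cancel' (syn y) h
  have hA : (i + 1) * ai + (y.drop i).sum < M := by
    have : (i + 1) * ai ≤ i + 1 := by nlinarith
    omega
  have hB : (j + 1) * aj + (y.drop j).sum < M := by
    have : (j + 1) * aj ≤ j + 1 := by nlinarith
    omega
  have hABeq : (i + 1) * ai + (y.drop i).sum = (j + 1) * aj + (y.drop j).sum := by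
    unfold Nat.ModEq at hAB
    rwa [Nat.mod_eq_of_lt hA, Nat.mod_eq_of_lt hB] at hAB
  -- split the segment between i and j
  set seg := (y.drop i).take (j - i) with hseg
  have hsplit : y.drop i = seg ++ (y.drop j) := by
    have : (y.drop i).drop (j - i) = y.drop j := by
      rw [List.drop_drop]
      congr 1
      omega
    rw [hseg, ← this, List.take_append_drop]
  have hseglen : seg.length = j - i := by
    rw [hseg, List.length_take, List.length_drop]; omega
  have hsegb : ∀ b ∈ seg, b < 2 := fun b hb => hdi b (List.take_subset _ _ hb)
  have hsegsum : seg.sum ≤ j - i := by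
    have := sum_le_length _ hsegb; omega
  have hsum : (y.drop i).sum = seg.sum + (y.drop j).sum := by
    rw [hsplit, List.sum_append]
  have E : (i + 1) * ai + seg.sum = (j + 1) * aj := by omega
  have key : ai = aj ∧ ∀ b ∈ seg, b = ai := by
    interval_cases ai <;> interval_cases aj
    · exact ⟨rfl, all_zero seg (by omega)⟩
    · exfalso; omega
    · exfalso; omega
    · exact ⟨rfl, all_one seg hsegb (by omega)⟩
  obtain ⟨rfl, hall⟩ := key
  apply insert_run y ai i j hij hj
  intro p hp hp'
  have hpy : p < y.length := lt_of_lt_of_le hp' hj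
  have h1 : y.getD p 0 = y[p] := List.getD_eq_getElem y 0 hpy
  have h2 : p - i < seg.length := by omega
  have h3 : seg[p - i] = y[p] := by
    simp only [hseg, List.getElem_take, List.getElem_drop]
    congr 1
    omega
  rw [h1, ← h3]
  exact hall _ (List.getElem_mem h2)

lemma take_drop_of_split (u v : List ℕ) (y : List ℕ) (hy : y = u ++ v) :
    y.take u.length = u ∧ y.drop u.length = v := by
  subst hy
  exact ⟨List.take_left, List.drop_left⟩

/-- In the binary case any absorption is a deletion. -/
lemma absorb_to_del (x y : List ℕ) (hx : ∀ b ∈ x, b < 2) (hne : x ≠ [])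
    (h : absorb1 2 x y) :
    ∃ i a, i ≤ y.length ∧ a < 2 ∧ x = y.take i ++ a :: y.drop i := by
  rcases h with ⟨u, v, p, q, hx1, hy1⟩ | h
  · have hp : p < 2 := hx _ (by simp [hx1])
    have hq : q < 2 := hx _ (by simp [hx1])
    have hv : vplus 2 p q = p ∨ vplus 2 p q = q := by
      unfold vplus; omega
    rcases hv with hpq | hpq
    · -- the surviving symbol is p; x is y with q inserted after position u.length
      rw [hpq] at hy1
      have hy2 : y = (u ++ [p]) ++ v := by rw [hy1]; simp
      obtain ⟨ht, hd⟩ := take_drop_of_split (u ++ [p]) v y hy2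
      refine ⟨(u ++ [p]).length, q, ?_, hq, ?_⟩
      · rw [hy2]; simp
      · rw [ht, hd, hx1]; simp
    · -- the surviving symbol is q; x is y with p inserted at position u.length
      rw [hpq] at hy1
      obtain ⟨ht, hd⟩ := take_drop_of_split u (q :: v) y hy1
      refine ⟨u.length, p, ?_, hp, ?_⟩
      · rw [hy1]; simp
      · rw [ht, hd, hx1]
  · refine ⟨y.length, x.getLast hne, le_refl _, hx _ (List.getLast_mem hne), ?_⟩
    rw [List.take_length, List.drop_length, h]
    exact (List.dropLast_append_getLast hne).symm

/-- for `n ≥ 1` and `0 ≤ a ≤ n`, the binary Varshamov–Tenengolts code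
`VT_a(n) = {c ∈ Σ_2^n : Syn(c) ≡ a (mod n+1)}` is a single-absorption correcting code:
distinct codewords have disjoint `1`-absorption balls. -/
theorem stmt1 (n a : ℕ) (hn : 1 ≤ n) (ha : a ≤ n)
    (c c' : List ℕ)
    (hclen : c.length = n) (hcq : ∀ b ∈ c, b < 2) (hcsyn : syn c ≡ a [MOD n + 1])
    (hclen' : c'.length = n) (hcq' : ∀ b ∈ c', b < 2) (hcsyn' : syn c' ≡ a [MOD n + 1])
    (hne : c ≠ c') :
    ball1 2 c ∩ ball1 2 c' = ∅ := by
  rw [Set.eq_empty_iff_forall_notMem]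
  rintro y ⟨h1, h2⟩
  have hc0 : c ≠ [] := by intro h; rw [h] at hclen; simp at hclen; omega
  have hc0' : c' ≠ [] := by intro h; rw [h] at hclen'; simp at hclen'; omega
  obtain ⟨i, ai, hi, hai, hci⟩ := absorb_to_del c y hcq hc0 h1
  obtain ⟨j, aj, hj, haj, hcj⟩ := absorb_to_del c' y hcq' hc0' h2
  have hyl : y.length + 1 = n := by
    have := congrArg List.length hci
    rw [hclen] at this
    simp only [List.length_append, List.length_cons, List.length_take,
      List.length_drop] at this
    omega
  have hyb : ∀ b ∈ y, b < 2 := by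
    intro b hb
    rw [← List.take_append_drop i y, List.mem_append] at hb
    apply hcq
    rw [hci]
    rcases hb with hb | hb
    · exact List.mem_append.2 (Or.inl hb)
    · exact List.mem_append.2 (Or.inr (List.mem_cons.2 (Or.inr hb)))
  have hcong : syn c ≡ syn c' [MOD y.length + 2] := by
    have hm : n + 1 = y.length + 2 := by omega
    rw [← hm]
    exact hcsyn.trans hcsyn'.symm
  rcases le_total i j with hij | hij
  · apply hne
    rw [hci, hcj]
    apply vt_core y i j ai aj hi hj hij hai haj hyb
    rw [← hci, ← hcj]
    exact hcong
  · apply hne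
    rw [hci, hcj]
    symm
    apply vt_core y j i aj ai hj hi hij haj hai hyb
    rw [← hci, ← hcj]
    exact hcong.symm
end

section
/- Let q ≥ 2, let x ∈ Σ_q^n and let 1 ≤ t < n. Then the t-absorption ball B_t^{ab}(x) is contained in the t-deletion-t-substitution ball B_t^{DS}(x); that is, every sequence obtained from x by t absorptions can be obtained from x by t deletions followed by at most t substitutions. -/
/-- `MergeBlocks op x y s` holds if `y` is obtained from `x` by replacing finitely many
disjoint blocks of consecutive symbols, each of length at least `2`, by the `op`-fold of the
block, where `s` is the total number of symbols that disappeared. -/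
inductive MergeBlocks (op : ℕ → ℕ → ℕ) : List ℕ → List ℕ → ℕ → Prop
  | nil : MergeBlocks op [] [] 0
  | keep (a : ℕ) {x y : List ℕ} {s : ℕ} : MergeBlocks op x y s →
      MergeBlocks op (a :: x) (a :: y) s
  | block (b : List ℕ) {x y : List ℕ} {s : ℕ} : 2 ≤ b.length →
      MergeBlocks op x y s →
      MergeBlocks op (b ++ x) (b.foldl op 0 :: y) (s + (b.length - 1))

/-- The `t`-absorption ball `B_t^{ab}(x)`. -/
def absorbBall (q t : ℕ) (x : List ℕ) : Set (List ℕ) :=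
  {y | ∃ t' ≤ t, MergeBlocks (vplus q) (x.take (x.length - t')) y (t - t')}

/-- The `t`-deletion-`t`-substitution ball `B_t^{DS}(x)`: all `z ∈ Σ_q^{n-t}` for which
there is a subsequence `w` of `x` of length `n-t` differing from `z` in at most `t`
coordinates. -/
def dsBall (q n t : ℕ) (x : List ℕ) : Set (List ℕ) :=
  {z | z.length = n - t ∧ (∀ a ∈ z, a < q) ∧
    ∃ w : List ℕ, w.Sublist x ∧ w.length = n - t ∧
      ((Finset.range (n - t)).filter (fun i => w.getD i 0 ≠ z.getD i 0)).card ≤ t}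

lemma filter_range_succ (P : ℕ → Prop) [DecidablePred P] (n : ℕ) :
    ((Finset.range (n+1)).filter P).card
      = ((Finset.range n).filter (fun i => P (i+1))).card + (if P 0 then 1 else 0) := by
  simp only [Finset.card_filter]
  exact Finset.sum_range_succ' _ n

lemma mb_len {op : ℕ → ℕ → ℕ} {a₀ y₀ : List ℕ} {s₀ : ℕ}
    (h : MergeBlocks op a₀ y₀ s₀) : a₀.length = y₀.length + s₀ := by
  induction h with
  | nil => rfl
  | keep a h ih => simp only [List.length_cons, ih]; omega
  | block b hb h ih => simp only [List.length_append, List.length_cons, ih]; omega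

lemma fold_lt {q : ℕ} (hq : 2 ≤ q) : ∀ (l : List ℕ) (z : ℕ), l ≠ [] →
    l.foldl (vplus q) z < q := by
  intro l
  induction l with
  | nil => simp
  | cons c tl ih =>
    intro z _
    rcases eq_or_ne tl [] with h | h
    · subst h
      simp only [List.foldl_cons, List.foldl_nil, vplus]
      omega
    · exact ih _ h

lemma mb_mem {q : ℕ} (hq : 2 ≤ q) {a₀ y₀ : List ℕ} {s₀ : ℕ}
    (h : MergeBlocks (vplus q) a₀ y₀ s₀) (ha : ∀ c ∈ a₀, c < q) : ∀ c ∈ y₀, c < q := by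
  induction h with
  | nil => simp
  | keep b h ih =>
    intro c hc
    rcases List.mem_cons.1 hc with rfl | hc
    · exact ha c List.mem_cons_self
    · exact ih (fun d hd => ha d (List.mem_cons_of_mem _ hd)) c hc
  | block b hb h ih =>
    intro c hc
    rcases List.mem_cons.1 hc with rfl | hc
    · exact fold_lt hq b 0 (by rintro rfl; simp at hb)
    · exact ih (fun d hd => ha d (List.mem_append_right _ hd)) c hc

lemma mb_sub {op : ℕ → ℕ → ℕ} {a₀ y₀ : List ℕ} {s₀ : ℕ}
    (h : MergeBlocks op a₀ y₀ s₀) :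
    ∃ w : List ℕ, w.Sublist a₀ ∧ w.length = y₀.length ∧
      ((Finset.range y₀.length).filter (fun i => w.getD i 0 ≠ y₀.getD i 0)).card ≤ s₀ := by
  induction h with
  | nil => exact ⟨[], List.Sublist.refl _, rfl, by simp⟩
  | @keep c x y s h ih =>
    obtain ⟨w, hw, hlen, hcard⟩ := ih
    refine ⟨c :: w, hw.cons₂ c, by simp [hlen], ?_⟩
    simp only [List.length_cons]
    rw [filter_range_succ]
    simpa [List.getD_cons_succ, List.getD_cons_zero] using hcard
  | @block b x y s hb h ih =>
    obtain ⟨w, hw, hlen, hcard⟩ := ih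
    obtain ⟨c, tl, rfl⟩ : ∃ c tl, b = c :: tl := by
      cases b with
      | nil => simp at hb
      | cons c tl => exact ⟨c, tl, rfl⟩
    refine ⟨c :: w, (hw.trans (List.sublist_append_right _ _)).cons₂ c, by simp [hlen], ?_⟩
    simp only [List.length_cons] at hb ⊢
    rw [filter_range_succ]
    simp only [List.getD_cons_succ]
    have h2 : (if (c :: w).getD 0 0 ≠ ((c :: tl).foldl op 0 :: y).getD 0 0 then 1 else 0) ≤ 1 := by
      split <;> omega
    omega

/-- for `q ≥ 2`, `x ∈ Σ_q^n` and `1 ≤ t < n`, the `t`-absorption ball is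
contained in the `t`-deletion-`t`-substitution ball: `B_t^{ab}(x) ⊆ B_t^{DS}(x)`. -/
theorem stmt2 (q n t : ℕ) (hq : 2 ≤ q) (ht : 1 ≤ t) (htn : t < n)
    (x : List ℕ) (hxlen : x.length = n) (hxq : ∀ a ∈ x, a < q)
    (y : List ℕ) (hy : y ∈ absorbBall q t x) :
    y ∈ dsBall q n t x := by
  obtain ⟨t', ht', hmb⟩ := hy
  have hxlen' : (x.take (x.length - t')).length = n - t' := by
    simp [hxlen]
  have hlen := mb_len hmb
  rw [hxlen'] at hlen
  have hylen : y.length = n - t := by omega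
  obtain ⟨w, hw, hwlen, hcard⟩ := mb_sub hmb
  rw [hylen] at hcard
  refine ⟨hylen, mb_mem hq hmb (fun c hc => hxq c (List.take_subset _ _ hc)), w,
    hw.trans (List.take_sublist _ _), by omega, hcard.trans (by omega)⟩
end

section
/- Let q ≥ 3 and n ≥ 3. For s = (s_a)_{a∈[0,q−2]} ∈ Z_4^{q−1}, t = (t_1,t_2) ∈ Z_n × Z_2 and d = (d_1,d_2) ∈ Z_{qn} × Z_{2n−3}, define C(n;s,t,d) = {x ∈ Σ_q^n : N_a(x) ≡ s_a (mod 4) for all a ∈ [0,q−2]; Syn(α(x)) ≡ t_1 (mod n); Inv(x) ≡ t_2 (mod 2); Syn(x) ≡ d_1 (mod qn); Syn(P(x)) ≡ d_2 (mod 2n−3)}. Then C(n;s,t,d) is a single-absorption correcting code: for any two distinct codewords x, x′ ∈ C(n;s,t,d), the 1-absorption balls B_1^{ab}(x) and B_1^{ab}(x′) are disjoint. -/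
/-- `α(x) ∈ Σ_2^{n-1}`: `α(x)_i = 1` iff `x_{i+1} ≥ x_i`. -/
def alphaSeq (x : List ℕ) : List ℕ :=
  (List.range (x.length - 1)).map (fun i => if x.getD i 0 ≤ x.getD (i + 1) 0 then 1 else 0)

/-- `Inv(x) = |{(i,j) : i < j, x_i > x_j}|`. -/
def invCount (x : List ℕ) : ℕ :=
  ((Finset.range x.length ×ˢ Finset.range x.length).filter
    (fun p => p.1 < p.2 ∧ x.getD p.2 0 < x.getD p.1 0)).card

/-- The location sequence `P(x) ∈ Σ_2^n`: `P(x)_i = 1` iff `x_i = q-1`. -/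
def pseq (q : ℕ) (x : List ℕ) : List ℕ := x.map (fun a => if a = q - 1 then 1 else 0)

/-- Membership in the code `C(n;s,t,d)` of Theorem 1. -/
def memCodeC (q n : ℕ) (s : ℕ → ℕ) (t1 t2 d1 d2 : ℕ) (x : List ℕ) : Prop :=
  x.length = n ∧ (∀ a ∈ x, a < q) ∧
  (∀ a, a ≤ q - 2 → x.count a ≡ s a [MOD 4]) ∧
  syn (alphaSeq x) ≡ t1 [MOD n] ∧
  invCount x ≡ t2 [MOD 2] ∧
  syn x ≡ d1 [MOD q * n] ∧
  syn (pseq q x) ≡ d2 [MOD 2 * n - 3]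

namespace AbsorptionCode

open List

theorem sum_range_getD (w : List ℕ) : ∑ i ∈ Finset.range w.length, w.getD i 0 = w.sum := by
  induction w with
  | nil => simp
  | cons a t ih =>
    rw [length_cons, Finset.sum_range_succ']
    simp only [getD_cons_succ, getD_cons_zero, ih, sum_cons, add_comm]

theorem syn_cons (c : ℕ) (w : List ℕ) : syn (c :: w) = c + w.sum + syn w := by
  unfold syn
  rw [length_cons, Finset.sum_range_succ']
  simp only [getD_cons_succ, getD_cons_zero, add_mul, one_mul, Finset.sum_add_distrib,
    sum_range_getD]
  ring

theorem syn_append (u w : List ℕ) : syn (u ++ w) = syn u + u.length * w.sum + syn w := by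
  induction u with
  | nil => simp [syn]
  | cons c t ih =>
    simp only [cons_append, syn_cons, ih, sum_append, length_cons]
    ring

theorem syn_insert (u v : List ℕ) (c : ℕ) :
    syn (u ++ c :: v) = syn (u ++ v) + ((u.length + 1) * c + v.sum) := by
  simp only [syn_append, syn_cons, sum_cons]
  ring

theorem syn_merge (u v : List ℕ) (a b m : ℕ) :
    syn (u ++ a :: b :: v) + (u.length + 1) * m
      = syn (u ++ m :: v) + (u.length + 1) * (a + b) + b + v.sum := by
  simp only [syn_append, syn_cons, sum_cons]
  ring

theorem syn_merge_add (u v : List ℕ) (a b : ℕ) :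
    syn (u ++ a :: b :: v) = syn (u ++ (a + b) :: v) + (b + v.sum) := by
  have := syn_merge u v a b (a + b)
  omega

theorem exists_eq_append_of_append_eq_append {α : Type*} {u v u' v' : List α}
    (h : u ++ v = u' ++ v') (hle : u.length ≤ u'.length) : ∃ m, u' = u ++ m ∧ v = m ++ v' := by
  rcases append_eq_append_iff.1 h with h | ⟨m, rfl, rfl⟩
  · exact h
  · obtain rfl : m = [] := by simpa using hle
    exact ⟨[], by simp, by simp⟩

theorem insert_eq_insert_of_forall_eq {α : Type*} {u m v : List α} {c : α}
    (h : ∀ a ∈ m, a = c) : u ++ c :: (m ++ v) = u ++ m ++ c :: v := by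
  obtain ⟨k, rfl⟩ : ∃ k, m = replicate k c := ⟨_, eq_replicate_iff.2 ⟨rfl, h⟩⟩
  rw [← cons_append, ← replicate_succ, replicate_succ', append_assoc, singleton_append,
    append_assoc]

theorem sum_le_length_of_binary {l : List ℕ} (h : ∀ a ∈ l, a ≤ 1) : l.sum ≤ l.length := by
  simpa using sum_le_card_nsmul l 1 h

theorem forall_eq_of_sum_eq_length_mul {m : List ℕ} {c : ℕ} (hm : ∀ a ∈ m, a ≤ 1) (hc : c ≤ 1)
    (h : m.sum = m.length * c) : ∀ a ∈ m, a = c := by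
  induction m with
  | nil => simp
  | cons a t ih =>
    have ha := hm a mem_cons_self
    have ht : ∀ b ∈ t, b ≤ 1 := fun b hb => hm b (mem_cons_of_mem a hb)
    have hsum := sum_le_length_of_binary ht
    simp only [sum_cons, length_cons] at h
    have hac : a = c ∧ t.sum = t.length * c := by interval_cases c <;> omega
    rintro b (_ | ⟨_, hb⟩)
    · exact hac.1
    · exact ih ht hac.2 b hb

/-- The Varshamov–Tenengolts property of binary words. -/
theorem insert_eq_insert_of_syn_modEq {u v u' v' : List ℕ} {c c' : ℕ}
    (hz : ∀ a ∈ u ++ v, a ≤ 1) (hc : c ≤ 1) (hc' : c' ≤ 1) (h : u ++ v = u' ++ v')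
    (hsyn : syn (u ++ c :: v) ≡ syn (u' ++ c' :: v') [MOD (u ++ v).length + 2]) :
    u ++ c :: v = u' ++ c' :: v' := by
  wlog hle : u.length ≤ u'.length generalizing u v u' v' c c'
  · rw [h] at hz hsyn
    exact (this hz hc' hc h.symm hsyn.symm (by omega)).symm
  obtain ⟨m, rfl, rfl⟩ := exists_eq_append_of_append_eq_append h hle
  have hmbin : ∀ a ∈ m, a ≤ 1 := fun a ha => hz a (by simp [ha])
  have hm := sum_le_length_of_binary hmbin
  have hv := sum_le_length_of_binary (l := v') fun a ha => hz a (by simp [ha])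
  rw [syn_insert, syn_insert, append_assoc] at hsyn
  simp only [sum_append, length_append] at hsyn
  have hweight : (u.length + 1) * c + (m.sum + v'.sum)
      = (u.length + m.length + 1) * c' + v'.sum := by
    refine Nat.ModEq.eq_of_lt_of_lt (Nat.ModEq.add_left_cancel' _ hsyn) ?_ ?_ <;>
      interval_cases c <;> interval_cases c' <;> omega
  obtain rfl : c = c' := by interval_cases c <;> interval_cases c' <;> omega
  have hsum : m.sum = m.length * c := by interval_cases c <;> omega
  exact insert_eq_insert_of_forall_eq (forall_eq_of_sum_eq_length_mul hmbin hc hsum)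

/-- The bit `α(x)_i` attached to the consecutive pair `(x_i, x_{i+1}) = (a, b)`. -/
def ascBit (a b : ℕ) : ℕ := if a ≤ b then 1 else 0

theorem ascBit_le_one (a b : ℕ) : ascBit a b ≤ 1 := by
  unfold ascBit; split <;> omega

theorem ascBit_eq_one_iff {a b : ℕ} : ascBit a b = 1 ↔ a ≤ b := by
  unfold ascBit; split <;> omega

theorem ascBit_eq_zero_iff {a b : ℕ} : ascBit a b = 0 ↔ b < a := by
  unfold ascBit; split <;> omega

theorem length_alphaSeq (x : List ℕ) : (alphaSeq x).length = x.length - 1 := by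
  simp [alphaSeq]

theorem alphaSeq_singleton (a : ℕ) : alphaSeq [a] = [] := by
  simp [alphaSeq]

theorem alphaSeq_cons_cons (a b : ℕ) (t : List ℕ) :
    alphaSeq (a :: b :: t) = ascBit a b :: alphaSeq (b :: t) := by
  simp [alphaSeq, ascBit, range_succ_eq_map, Function.comp_def]

theorem le_one_of_mem_alphaSeq {x : List ℕ} : ∀ e ∈ alphaSeq x, e ≤ 1 := by
  simp only [alphaSeq, mem_map]
  rintro e ⟨i, -, rfl⟩
  split <;> omega

theorem alphaSeq_append_cons_cons (u w : List ℕ) (a b : ℕ) :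
    alphaSeq (u ++ a :: b :: w) = alphaSeq (u ++ [a]) ++ ascBit a b :: alphaSeq (b :: w) := by
  induction u with
  | nil => simp [alphaSeq_cons_cons, alphaSeq_singleton]
  | cons c t ih =>
    cases t with
    | nil => simp [alphaSeq_cons_cons, alphaSeq_singleton]
    | cons d t => simp only [cons_append, alphaSeq_cons_cons] at ih ⊢; rw [ih]

theorem alphaSeq_append_drop_length {u w : List ℕ} (hw : w ≠ []) :
    (alphaSeq (u ++ w)).drop u.length = alphaSeq w := by
  induction u with
  | nil => simp
  | cons c t ih =>
    obtain ⟨e, r, her⟩ := exists_cons_of_ne_nil (append_ne_nil_of_right_ne_nil t hw)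
    rw [cons_append, her, alphaSeq_cons_cons, length_cons, drop_succ_cons, ← her, ih]

theorem alphaSeq_append_take (w v : List ℕ) :
    (alphaSeq (w ++ v)).take (w.length - 1) = alphaSeq w := by
  induction w with
  | nil => simp [alphaSeq]
  | cons a t ih =>
    cases t with
    | nil => simp [alphaSeq_singleton]
    | cons b t =>
      simp only [cons_append, alphaSeq_cons_cons, length_cons] at ih ⊢
      rw [show t.length + 1 + 1 - 1 = t.length + 1 by omega, take_succ_cons]
      simpa using ih

theorem alphaSeq_eq_of_alphaSeq_append_eq {u w w' v : List ℕ} (hw : w ≠ []) (hw' : w' ≠ [])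
    (hlen : w.length = w'.length) (h : alphaSeq (u ++ w ++ v) = alphaSeq (u ++ w' ++ v)) :
    alphaSeq w = alphaSeq w' := by
  have := congrArg (fun l => (l.drop u.length).take (w.length - 1)) h
  simp only [append_assoc] at this
  rwa [alphaSeq_append_drop_length (by simp [hw]), alphaSeq_append_drop_length (by simp [hw']),
    alphaSeq_append_take, hlen, alphaSeq_append_take] at this

theorem exists_alphaSeq_insert {u v : List ℕ} (c : ℕ) (h : u ++ v ≠ []) :
    ∃ u₁ v₁ e, e ≤ 1 ∧ alphaSeq (u ++ v) = u₁ ++ v₁ ∧ alphaSeq (u ++ c :: v) = u₁ ++ e :: v₁ := by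
  rcases eq_nil_or_concat u with rfl | ⟨u, a, rfl⟩
  · obtain ⟨b, w, rfl⟩ := exists_cons_of_ne_nil (by simpa using h)
    exact ⟨[], alphaSeq (b :: w), ascBit c b, ascBit_le_one c b, rfl, alphaSeq_cons_cons c b w⟩
  simp only [concat_eq_append, append_assoc, singleton_append]
  cases v with
  | nil =>
    refine ⟨alphaSeq (u ++ [a]), [], ascBit a c, ascBit_le_one a c, by simp, ?_⟩
    simp [alphaSeq_append_cons_cons, alphaSeq_singleton]
  | cons b w =>
    have hx : alphaSeq (u ++ a :: c :: b :: w)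
        = alphaSeq (u ++ [a]) ++ ascBit a c :: ascBit c b :: alphaSeq (b :: w) := by
      rw [alphaSeq_append_cons_cons, alphaSeq_cons_cons]
    rw [alphaSeq_append_cons_cons, hx]
    by_cases hac : ascBit a c = ascBit a b
    · exact ⟨alphaSeq (u ++ [a]) ++ [ascBit a b], alphaSeq (b :: w), ascBit c b,
        ascBit_le_one c b, by simp, by simp [hac]⟩
    · have hcb : ascBit c b = ascBit a b := by
        unfold ascBit at *; split_ifs at * <;> omega
      exact ⟨alphaSeq (u ++ [a]), ascBit a b :: alphaSeq (b :: w), ascBit a c,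
        ascBit_le_one a c, rfl, by simp [hcb]⟩

theorem isChain_of_forall_mem_alphaSeq {x : List ℕ} {k : ℕ} (h : ∀ e ∈ alphaSeq x, e = k) :
    IsChain (fun a b => ascBit a b = k) x := by
  induction x with
  | nil => exact .nil
  | cons a t ih =>
    cases t with
    | nil => exact .singleton a
    | cons b t =>
      rw [alphaSeq_cons_cons] at h
      exact isChain_cons_cons.2 ⟨h _ mem_cons_self, ih fun e he => h e (mem_cons_of_mem _ he)⟩

theorem forall_eq_of_append_singleton_eq_cons {A : List ℕ} {a b : ℕ} (h : A ++ [b] = a :: A) :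
    ∀ e ∈ A, e = a := by
  induction A with
  | nil => simp
  | cons x A ih =>
    obtain ⟨rfl, hA⟩ := cons_eq_cons.1 h
    rintro e (_ | ⟨_, he⟩)
    · rfl
    · exact ih hA e he

/-- The ascent sequence of `d :: m ++ [d]` is constant, so this word is monotone with equal ends. -/
theorem forall_eq_of_alphaSeq_cons_eq {d : ℕ} {m : List ℕ}
    (h : alphaSeq (d :: m) = alphaSeq (m ++ [d])) : ∀ a ∈ m, a = d := by
  obtain ⟨l, b, hl⟩ : ∃ l b, d :: m = l ++ [b] :=
    ⟨_, _, (dropLast_append_getLast (cons_ne_nil d m)).symm⟩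
  obtain ⟨b', r, hr⟩ := exists_cons_of_ne_nil (concat_ne_nil d m)
  have h₁ : alphaSeq (d :: (m ++ [d])) = alphaSeq (d :: m) ++ [ascBit b d] := by
    rw [← cons_append, hl, append_assoc, singleton_append, alphaSeq_append_cons_cons,
      alphaSeq_singleton]
  have h₂ : alphaSeq (d :: (m ++ [d])) = ascBit d b' :: alphaSeq (m ++ [d]) := by
    rw [hr, alphaSeq_cons_cons]
  have hconst : ∀ e ∈ alphaSeq (d :: (m ++ [d])), e = ascBit d b' := by
    rw [h₂]
    rintro e (_ | ⟨_, he⟩)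
    · rfl
    · rw [← h] at he
      exact forall_eq_of_append_singleton_eq_cons (by rw [← h₁, h₂, h]) e he
  have hchain := isChain_of_forall_mem_alphaSeq hconst
  by_cases hup : ascBit d b' = 1
  · have hle : Pairwise (· ≤ ·) (d :: (m ++ [d])) :=
      (hchain.imp fun _ _ hxy => ascBit_eq_one_iff.1 (hxy.trans hup)).pairwise
    rw [pairwise_cons, pairwise_append] at hle
    intro a ha
    exact le_antisymm (hle.2.2.2 a ha d mem_cons_self) (hle.1 a (mem_append_left _ ha))
  · have hdown : ascBit d b' = 0 := by have := ascBit_le_one d b'; omega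
    have hlt : Pairwise (fun x y => y < x) (d :: (m ++ [d])) :=
      (hchain.imp fun _ _ hxy => ascBit_eq_zero_iff.1 (hxy.trans hdown)).pairwise
    exact absurd (pairwise_cons.1 hlt |>.1 d (by simp)) (lt_irrefl d)

theorem alphaSeq_insert_eq_of_syn_modEq {u v u' v' : List ℕ} {d d' : ℕ}
    (h : u ++ v = u' ++ v') (hne : u ++ v ≠ [])
    (hsyn : syn (alphaSeq (u ++ d :: v)) ≡ syn (alphaSeq (u' ++ d' :: v'))
      [MOD (u ++ v).length + 1]) :
    alphaSeq (u ++ d :: v) = alphaSeq (u' ++ d' :: v') := by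
  obtain ⟨u₁, v₁, e, he, hy, hx⟩ := exists_alphaSeq_insert d hne
  obtain ⟨u₂, v₂, e', he', hy', hx'⟩ := exists_alphaSeq_insert d' (h ▸ hne)
  have hmod : (u₁ ++ v₁).length + 2 = (u ++ v).length + 1 := by
    rw [← hy, length_alphaSeq]
    have := length_pos_iff.2 hne
    omega
  rw [hx, hx'] at hsyn ⊢
  refine insert_eq_insert_of_syn_modEq ?_ he he' (hy.symm.trans (h ▸ hy')) (hmod ▸ hsyn)
  rw [← hy]
  exact le_one_of_mem_alphaSeq

theorem insert_eq_insert_of_alphaSeq_eq {u v u' v' : List ℕ} {d : ℕ} (h : u ++ v = u' ++ v')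
    (hα : alphaSeq (u ++ d :: v) = alphaSeq (u' ++ d :: v')) : u ++ d :: v = u' ++ d :: v' := by
  wlog hle : u.length ≤ u'.length generalizing u v u' v'
  · exact (this h.symm hα.symm (by omega)).symm
  obtain ⟨m, rfl, rfl⟩ := exists_eq_append_of_append_eq_append h hle
  refine insert_eq_insert_of_forall_eq (forall_eq_of_alphaSeq_cons_eq ?_)
  refine alphaSeq_eq_of_alphaSeq_append_eq (u := u) (v := v') (cons_ne_nil d m)
    (concat_ne_nil d m) (by simp) ?_
  simpa using hα

section Counts

theorem count_insert (u v : List ℕ) (d c : ℕ) :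
    (u ++ d :: v).count c = (u ++ v).count c + if d = c then 1 else 0 := by
  simp only [count_append, count_cons, beq_iff_eq]
  omega

theorem count_merge (u v : List ℕ) (a b m c : ℕ) :
    (u ++ a :: b :: v).count c + (if m = c then 1 else 0)
      = (u ++ m :: v).count c + (if a = c then 1 else 0) + (if b = c then 1 else 0) := by
  simp only [count_append, count_cons, beq_iff_eq]
  omega

variable {q : ℕ} {u v u' v' : List ℕ}

theorem eq_of_count_modEq_insert {d d' : ℕ} (hd : d < q) (hd' : d' < q)
    (h : u ++ v = u' ++ v')
    (hcnt : ∀ c ≤ q - 2, (u ++ d :: v).count c ≡ (u' ++ d' :: v').count c [MOD 4]) :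
    d = d' := by
  have key : ∀ c ≤ q - 2, (if d = c then 1 else 0) = (if d' = c then 1 else 0) := by
    intro c hc
    have := hcnt c hc
    rw [count_insert, count_insert, ← h] at this
    unfold Nat.ModEq at this
    split_ifs at this ⊢ <;> omega
  by_cases hdq : d ≤ q - 2
  · have := key d hdq
    split_ifs at this <;> omega
  · by_cases hdq' : d' ≤ q - 2
    · have := key d' hdq'
      split_ifs at this <;> omega
    · omega

theorem not_count_modEq_insert_sumMerge {d a' b' : ℕ} (ha' : 1 ≤ a') (hb' : 1 ≤ b')
    (hab' : a' + b' ≤ q - 2) (h : u ++ v = u' ++ (a' + b') :: v')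
    (hcnt : ∀ c ≤ q - 2, (u ++ d :: v).count c ≡ (u' ++ a' :: b' :: v').count c [MOD 4]) :
    False := by
  have hx := count_insert u v d (a' + b')
  have hx' := count_merge u' v' a' b' (a' + b') (a' + b')
  have := hcnt _ hab'
  rw [h] at hx
  unfold Nat.ModEq at this
  split_ifs at hx hx' <;> omega

theorem not_count_modEq_insert_saturatedMerge {d a' b' : ℕ} (ha' : 1 ≤ a') (ha'q : a' ≤ q - 2)
    (hb'q : b' ≤ q - 2) (h : u ++ v = u' ++ (q - 1) :: v')
    (hcnt : ∀ c ≤ q - 2, (u ++ d :: v).count c ≡ (u' ++ a' :: b' :: v').count c [MOD 4]) :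
    False := by
  have hxa := count_insert u v d a'
  have hxb := count_insert u v d b'
  have hxa' := count_merge u' v' a' b' (q - 1) a'
  have hxb' := count_merge u' v' a' b' (q - 1) b'
  have ha := hcnt _ ha'q
  have hb := hcnt _ hb'q
  rw [h] at hxa hxb
  unfold Nat.ModEq at ha hb
  split_ifs at hxa hxb hxa' hxb' <;> omega

theorem not_count_modEq_sumMerge_saturatedMerge {a b a' b' : ℕ} (ha : 1 ≤ a) (hb : 1 ≤ b)
    (hab : a + b ≤ q - 2) (h : u ++ (a + b) :: v = u' ++ (q - 1) :: v')
    (hcnt : ∀ c ≤ q - 2, (u ++ a :: b :: v).count c ≡ (u' ++ a' :: b' :: v').count c [MOD 4]) :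
    False := by
  have hx := count_merge u v a b (a + b) (a + b)
  have hx' := count_merge u' v' a' b' (q - 1) (a + b)
  have := hcnt _ hab
  rw [h] at hx
  unfold Nat.ModEq at this
  split_ifs at hx hx' <;> omega

theorem add_eq_of_count_modEq_saturatedMerge {a b a' b' : ℕ} (ha : a ≤ q - 2) (hb : b ≤ q - 2)
    (h : u ++ (q - 1) :: v = u' ++ (q - 1) :: v')
    (hcnt : ∀ c ≤ q - 2, (u ++ a :: b :: v).count c ≡ (u' ++ a' :: b' :: v').count c [MOD 4]) :
    a + b = a' + b' := by
  have key : ∀ c ≤ q - 2, (if a = c then 1 else 0) + (if b = c then 1 else 0)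
      = (if a' = c then 1 else 0) + (if b' = c then 1 else 0) := by
    intro c hc
    have hx := count_merge u v a b (q - 1) c
    have hx' := count_merge u' v' a' b' (q - 1) c
    have := hcnt c hc
    rw [h] at hx
    unfold Nat.ModEq at this
    split_ifs at hx hx' ⊢ <;> omega
  have hka := key a ha
  have hkb := key b hb
  split_ifs at hka hkb <;> omega

end Counts

theorem absorb1_cases {q : ℕ} {x y : List ℕ} (hx : ∀ e ∈ x, e < q) (hne : x ≠ [])
    (h : absorb1 q x y) :
    (∃ u v d, x = u ++ d :: v ∧ y = u ++ v) ∨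
    (∃ u v a b, x = u ++ a :: b :: v ∧ y = u ++ (a + b) :: v ∧
      1 ≤ a ∧ 1 ≤ b ∧ a + b ≤ q - 2) ∨
    (∃ u v a b, x = u ++ a :: b :: v ∧ y = u ++ (q - 1) :: v ∧
      1 ≤ a ∧ a ≤ q - 2 ∧ 1 ≤ b ∧ b ≤ q - 2) := by
  rcases h with ⟨u, v, a, b, rfl, rfl⟩ | rfl
  · have ha := hx a (by simp)
    have hb := hx b (by simp)
    by_cases hva : vplus q a b = b
    · exact .inl ⟨u, b :: v, a, rfl, by rw [hva]⟩
    by_cases hvb : vplus q a b = a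
    · exact .inl ⟨u ++ [a], v, b, by simp, by simp [hvb]⟩
    unfold vplus at hva hvb
    by_cases hab : a + b ≤ q - 2
    · exact .inr (.inl ⟨u, v, a, b, rfl, by unfold vplus; congr 2; omega, by omega, by omega, hab⟩)
    · exact .inr (.inr ⟨u, v, a, b, rfl, by unfold vplus; congr 2; omega,
        by omega, by omega, by omega, by omega⟩)
  · exact .inl ⟨x.dropLast, [], x.getLast hne, (dropLast_append_getLast hne).symm, by simp⟩

theorem sum_lt_mul_length {q : ℕ} {x : List ℕ} (hx : ∀ e ∈ x, e < q) (hne : x ≠ []) :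
    x.sum < q * x.length := by
  have hsum : x.sum ≤ x.length * (q - 1) := by
    simpa [mul_comm] using sum_le_card_nsmul x (q - 1) fun e he => Nat.le_sub_one_of_lt (hx e he)
  have hlen := length_pos_iff.2 hne
  have hq : 0 < q := (Nat.zero_le _).trans_lt (hx _ (head_mem hne))
  calc x.sum ≤ x.length * (q - 1) := hsum
    _ < x.length * q := Nat.mul_lt_mul_of_pos_left (by omega) hlen
    _ = q * x.length := mul_comm _ _

theorem sumMerge_eq_of_syn_modEq {N : ℕ} {u v u' v' : List ℕ} {a b a' b' : ℕ}
    (ha : 1 ≤ a) (ha' : 1 ≤ a') (h : u ++ (a + b) :: v = u' ++ (a' + b') :: v')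
    (hsyn : syn (u ++ a :: b :: v) ≡ syn (u' ++ a' :: b' :: v') [MOD N])
    (hN : (u ++ a :: b :: v).sum < N) (hN' : (u' ++ a' :: b' :: v').sum < N) :
    u ++ a :: b :: v = u' ++ a' :: b' :: v' := by
  wlog hle : u.length ≤ u'.length generalizing u v u' v' a b a' b'
  · exact (this ha' ha h.symm hsyn.symm hN' hN (by omega)).symm
  rw [syn_merge_add, syn_merge_add, h] at hsyn
  have htail : b + v.sum = b' + v'.sum :=
    (Nat.ModEq.add_left_cancel' _ hsyn).eq_of_lt_of_lt
      (by simp only [sum_append, sum_cons] at hN; omega)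
      (by simp only [sum_append, sum_cons] at hN'; omega)
  obtain ⟨m, rfl, hv⟩ := exists_eq_append_of_append_eq_append h hle
  cases m with
  | nil =>
    obtain ⟨hab, rfl⟩ := cons_eq_cons.1 hv
    obtain rfl : b = b' := by omega
    obtain rfl : a = a' := by omega
    simp
  | cons s m =>
    rw [cons_append] at hv
    obtain ⟨-, rfl⟩ := cons_eq_cons.1 hv
    simp only [sum_append, sum_cons] at htail
    omega

theorem syn_pseq_saturatedMerge (q : ℕ) (u v : List ℕ) {a b : ℕ} (ha : a ≠ q - 1)
    (hb : b ≠ q - 1) :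
    syn (pseq q (u ++ a :: b :: v)) + (u.length + 1)
      = syn (pseq q (u ++ (q - 1) :: v)) + (pseq q v).sum := by
  simpa [pseq, ha, hb] using syn_merge (pseq q u) (pseq q v) 0 0 1

theorem sum_pseq_le_length (q : ℕ) (l : List ℕ) : (pseq q l).sum ≤ l.length := by
  have hbin : ∀ e ∈ pseq q l, e ≤ 1 := by
    simp only [pseq, mem_map]
    rintro _ ⟨a, -, rfl⟩
    split <;> omega
  simpa [pseq] using sum_le_length_of_binary hbin

theorem syn_pseq_saturatedMerge_shift (q : ℕ) (u m v : List ℕ) {a b a' b' : ℕ}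
    (ha : a ≠ q - 1) (hb : b ≠ q - 1) (ha' : a' ≠ q - 1) (hb' : b' ≠ q - 1) :
    syn (pseq q (u ++ (q - 1) :: (m ++ a' :: b' :: v))) + (m.length + (pseq q m).sum + 2)
      = syn (pseq q (u ++ a :: b :: (m ++ (q - 1) :: v))) := by
  have hx := syn_pseq_saturatedMerge q u (m ++ (q - 1) :: v) ha hb
  have hx' := syn_pseq_saturatedMerge q (u ++ (q - 1) :: m) v ha' hb'
  have hsum : (pseq q (m ++ (q - 1) :: v)).sum = (pseq q m).sum + 1 + (pseq q v).sum := by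
    simp only [pseq, map_append, map_cons, if_pos, sum_append, sum_cons]
    ring
  simp only [append_assoc, cons_append, length_append, length_cons] at hx'
  omega

theorem saturatedMerge_eq {q n N : ℕ} {u v u' v' : List ℕ} {a b a' b' : ℕ}
    (ha : a ≠ q - 1) (hb : b ≠ q - 1) (ha' : a' ≠ q - 1) (hb' : b' ≠ q - 1)
    (hab : a + b = a' + b') (h : u ++ (q - 1) :: v = u' ++ (q - 1) :: v')
    (hsyn : syn (u ++ a :: b :: v) ≡ syn (u' ++ a' :: b' :: v') [MOD N])
    (hN : (u ++ a :: b :: v).sum < N) (hN' : (u' ++ a' :: b' :: v').sum < N)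
    (hlen : (u ++ a :: b :: v).length = n) (hlen' : (u' ++ a' :: b' :: v').length = n)
    (hP : syn (pseq q (u ++ a :: b :: v)) ≡ syn (pseq q (u' ++ a' :: b' :: v')) [MOD 2 * n - 3]) :
    u ++ a :: b :: v = u' ++ a' :: b' :: v' := by
  wlog hle : u.length ≤ u'.length generalizing u v u' v' a b a' b'
  · exact (this ha' hb' ha hb hab.symm h.symm hsyn.symm hN' hN hlen' hlen hP.symm (by omega)).symm
  obtain ⟨m, rfl, hv⟩ := exists_eq_append_of_append_eq_append h hle
  cases m with
  | nil =>
    obtain rfl : v = v' := (cons_eq_cons.1 hv).2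
    have hs := syn_merge u v a b (q - 1)
    have hs' := syn_merge u v a' b' (q - 1)
    simp only [append_nil] at hsyn hN' ⊢
    have hswap : syn (u ++ a :: b :: v) + b' = syn (u ++ a' :: b' :: v) + b := by
      rw [← hab] at hs'
      omega
    have hbb : b ≡ b' [MOD N] :=
      Nat.ModEq.add_left_cancel' _ (by rw [← hswap]; exact hsyn.add_right b')
    obtain rfl : b = b' := hbb.eq_of_lt_of_lt
      (by simp only [sum_append, sum_cons] at hN; omega)
      (by simp only [sum_append, sum_cons] at hN'; omega)
    obtain rfl : a = a' := by omega
    rfl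
  | cons s m =>
    obtain ⟨rfl, rfl⟩ := cons_eq_cons.1 hv
    have hshift := syn_pseq_saturatedMerge_shift q u m v' ha hb ha' hb'
    have hdiff : m.length + (pseq q m).sum + 2 ≡ 0 [MOD 2 * n - 3] :=
      Nat.ModEq.add_left_cancel' (syn (pseq q (u ++ (q - 1) :: (m ++ a' :: b' :: v'))))
        (by rw [add_zero, hshift]; simpa using hP)
    have hm := sum_pseq_le_length q m
    simp only [append_assoc, cons_append, length_append, length_cons] at hlen'
    have := hdiff.eq_of_lt_of_lt (by omega) (by omega)
    omega

theorem eq_of_memCodeC_of_absorb1 {q n : ℕ} (hn : 2 ≤ n) {s : ℕ → ℕ}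
    {t1 t2 d1 d2 : ℕ} {x x' y : List ℕ}
    (hx : memCodeC q n s t1 t2 d1 d2 x) (hx' : memCodeC q n s t1 t2 d1 d2 x')
    (hy : absorb1 q x y) (hy' : absorb1 q x' y) : x = x' := by
  obtain ⟨hlen, hxq, hcnt, hα, -, hsyn, hP⟩ := hx
  obtain ⟨hlen', hx'q, hcnt', hα', -, hsyn', hP'⟩ := hx'
  replace hcnt : ∀ c ≤ q - 2, x.count c ≡ x'.count c [MOD 4] :=
    fun c hc => (hcnt c hc).trans (hcnt' c hc).symm
  replace hα := hα.trans hα'.symm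
  replace hsyn := hsyn.trans hsyn'.symm
  replace hP := hP.trans hP'.symm
  have hne : x ≠ [] := ne_nil_of_length_pos (by omega)
  have hne' : x' ≠ [] := ne_nil_of_length_pos (by omega)
  have hN := hlen ▸ sum_lt_mul_length hxq hne
  have hN' := hlen' ▸ sum_lt_mul_length hx'q hne'
  rcases absorb1_cases hxq hne hy with
      ⟨u, v, d, rfl, rfl⟩ | ⟨u, v, a, b, rfl, rfl, ha, hb, hab⟩ |
      ⟨u, v, a, b, rfl, rfl, ha, haq, hb, hbq⟩ <;>
    rcases absorb1_cases hx'q hne' hy' with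
      ⟨u', v', d', rfl, h⟩ | ⟨u', v', a', b', rfl, h, ha', hb', hab'⟩ |
      ⟨u', v', a', b', rfl, h, ha', haq', hb', hbq'⟩
  · obtain rfl := eq_of_count_modEq_insert (hxq d (by simp)) (hx'q d' (by simp)) h hcnt
    have hlen_y : (u ++ v).length + 1 = n := by
      simp only [length_append, length_cons] at hlen ⊢; omega
    exact insert_eq_insert_of_alphaSeq_eq h
      (alphaSeq_insert_eq_of_syn_modEq h (ne_nil_of_length_pos (by omega)) (hlen_y ▸ hα))
  · exact (not_count_modEq_insert_sumMerge ha' hb' hab' h hcnt).elim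
  · exact (not_count_modEq_insert_saturatedMerge ha' haq' hbq' h hcnt).elim
  · exact (not_count_modEq_insert_sumMerge ha hb hab h.symm fun c hc => (hcnt c hc).symm).elim
  · exact sumMerge_eq_of_syn_modEq ha ha' h hsyn hN hN'
  · exact (not_count_modEq_sumMerge_saturatedMerge ha hb hab h hcnt).elim
  · exact (not_count_modEq_insert_saturatedMerge ha haq hbq h.symm
      fun c hc => (hcnt c hc).symm).elim
  · exact (not_count_modEq_sumMerge_saturatedMerge ha' hb' hab' h.symm
      fun c hc => (hcnt c hc).symm).elim
  · have hsum := add_eq_of_count_modEq_saturatedMerge haq hbq h hcnt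
    exact saturatedMerge_eq (by omega) (by omega) (by omega) (by omega) hsum h hsyn hN hN'
      hlen hlen' hP

end AbsorptionCode

theorem stmt6_general (q n : ℕ) (hn : 3 ≤ n)
    (s : ℕ → ℕ) (t1 t2 d1 d2 : ℕ)
    (x x' : List ℕ)
    (hx : memCodeC q n s t1 t2 d1 d2 x) (hx' : memCodeC q n s t1 t2 d1 d2 x')
    (hne : x ≠ x') :
    ball1 q x ∩ ball1 q x' = ∅ :=
  Set.eq_empty_of_forall_notMem fun _ ⟨hy, hy'⟩ =>
    hne (AbsorptionCode.eq_of_memCodeC_of_absorb1 (by omega) hx hx' hy hy')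

/-- Theorem 1: for `q ≥ 3` and `n ≥ 3`, the code `C(n;s,t,d)` is a
single-absorption correcting code: distinct codewords have disjoint `1`-absorption balls. -/
theorem stmt6 (q n : ℕ) (hq : 3 ≤ q) (hn : 3 ≤ n)
    (s : ℕ → ℕ) (t1 t2 d1 d2 : ℕ)
    (x x' : List ℕ)
    (hx : memCodeC q n s t1 t2 d1 d2 x) (hx' : memCodeC q n s t1 t2 d1 d2 x')
    (hne : x ≠ x') :
    ball1 q x ∩ ball1 q x' = ∅ :=
  stmt6_general q n hn s t1 t2 d1 d2 x x' hx hx' hne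
end

section
/- Let q ≥ 3 and n ≥ 3. There exist s ∈ Z_4^{q−1}, t = (t_1,t_2) ∈ Z_n × Z_2 and d = (d_1,d_2) ∈ Z_{qn} × Z_{2n−3} such that |C(n;s,t,d)| ≥ q^n / (4^{q−1} · n · 2 · (qn) · (2n−3)); in particular the redundancy n − log_q |C(n;s,t,d)| is at most 3 log_q(n) + O(1). -/
/-!
Every word of `Σ_q^n` is sorted by the residues of the statistics that define the code, which
take `4^(q-1) · n · 2 · (qn) · (2n-3)` values; by the pigeonhole principle one class has at least
`q^n` divided by that many words, and that class is exactly the code for the matching `s, t, d`.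
-/

open Finset

theorem exists_card_le_card_fiber_mul_card {α β : Type*} [Fintype α] [Fintype β] [Nonempty β]
    [DecidableEq β] (f : α → β) :
    ∃ y, Fintype.card α ≤ #{x | f x = y} * Fintype.card β := by
  have hβ : (0 : ℚ) < Fintype.card β := by exact_mod_cast Fintype.card_pos
  obtain ⟨y, hy⟩ := Fintype.exists_le_card_fiber_of_nsmul_le_card f
    (b := (Fintype.card α / Fintype.card β : ℚ)) (by rw [nsmul_eq_mul, mul_div_cancel₀ _ hβ.ne'])
  exact ⟨y, by exact_mod_cast (div_le_iff₀ hβ).1 hy⟩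

def toWord (q n : ℕ) (w : Fin n → Fin q) : List ℕ := List.ofFn fun i => (w i : ℕ)

theorem toWord_injective (q n : ℕ) : Function.Injective (toWord q n) :=
  fun _ _ h => funext fun i => Fin.val_injective (congrFun (List.ofFn_inj.1 h) i)

theorem range_toWord (q n : ℕ) :
    Set.range (toWord q n) = {x | x.length = n ∧ ∀ a ∈ x, a < q} := by
  ext x
  constructor
  · rintro ⟨w, rfl⟩
    refine ⟨List.length_ofFn, fun a ha => ?_⟩
    obtain ⟨i, rfl⟩ := List.mem_ofFn.1 ha
    exact (w i).isLt
  · rintro ⟨rfl, hx⟩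
    exact ⟨fun i => ⟨x[i], hx _ (List.getElem_mem _)⟩, List.ofFn_getElem⟩

abbrev SyndromeSpace (q n : ℕ) :=
  (Fin (q - 1) → ZMod 4) × ZMod n × ZMod 2 × ZMod (q * n) × ZMod (2 * n - 3)

theorem card_syndromeSpace (q n : ℕ) [NeZero n] [NeZero (q * n)] [NeZero (2 * n - 3)] :
    Fintype.card (SyndromeSpace q n) = 4 ^ (q - 1) * n * 2 * (q * n) * (2 * n - 3) := by
  simp only [Fintype.card_prod, Fintype.card_fun, Fintype.card_fin, ZMod.card]
  ring

def syndrome (q n : ℕ) (x : List ℕ) : SyndromeSpace q n :=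
  (fun a => x.count (a : ℕ), syn (alphaSeq x), invCount x, syn x, syn (pseq q x))

def residues (q n : ℕ) (s : ℕ → ℕ) (t1 t2 d1 d2 : ℕ) : SyndromeSpace q n :=
  (fun a => s a, t1, t2, d1, d2)

theorem residues_surjective (q n : ℕ) [NeZero n] [NeZero (q * n)] [NeZero (2 * n - 3)]
    (y : SyndromeSpace q n) : ∃ s t1 t2 d1 d2, residues q n s t1 t2 d1 d2 = y := by
  obtain ⟨c, t1, t2, d1, d2⟩ := y
  refine ⟨fun a => if h : a < q - 1 then (c ⟨a, h⟩).val else 0, t1.val, t2.val, d1.val, d2.val, ?_⟩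
  simp [residues]

theorem memCodeC_iff {q n : ℕ} (hq : 2 ≤ q) (s : ℕ → ℕ) (t1 t2 d1 d2 : ℕ) (x : List ℕ) :
    memCodeC q n s t1 t2 d1 d2 x ↔
      (x.length = n ∧ ∀ a ∈ x, a < q) ∧ syndrome q n x = residues q n s t1 t2 d1 d2 := by
  -- `2 ≤ q` keeps `q - 2` from truncating, so that `a ≤ q - 2 ↔ a < q - 1`.
  have hcount : (∀ a, a ≤ q - 2 → x.count a ≡ s a [MOD 4]) ↔
      ∀ a : Fin (q - 1), (x.count (a : ℕ) : ZMod 4) = s a := by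
    simp only [ZMod.natCast_eq_natCast_iff]
    exact ⟨fun h a => h a (by omega), fun h a ha => h ⟨a, by omega⟩⟩
  simp only [memCodeC, syndrome, residues, Prod.mk.injEq, funext_iff, hcount,
    ZMod.natCast_eq_natCast_iff, and_assoc]

theorem ncard_setOf_memCodeC {q n : ℕ} (hq : 2 ≤ q) (s : ℕ → ℕ) (t1 t2 d1 d2 : ℕ) :
    {x | memCodeC q n s t1 t2 d1 d2 x}.ncard =
      #{w : Fin n → Fin q | syndrome q n (toWord q n w) = residues q n s t1 t2 d1 d2} := by
  have hcode : {x | memCodeC q n s t1 t2 d1 d2 x} =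
      toWord q n '' (toWord q n ⁻¹' {x | syndrome q n x = residues q n s t1 t2 d1 d2}) := by
    rw [Set.image_preimage_eq_inter_range, range_toWord]
    ext x
    simp only [Set.mem_ofPred_eq, Set.mem_inter_iff, memCodeC_iff hq, and_comm]
  rw [hcode, Set.ncard_image_of_injective _ (toWord_injective q n), Set.preimage_ofPred_eq,
    Set.ncard_eq_toFinset_card', Set.toFinset_ofPred]

/-- there exist parameters `s, t, d` such that
`|C(n;s,t,d)| ≥ q^n / (4^{q-1} · n · 2 · (qn) · (2n-3))`
(stated multiplicatively, avoiding division). -/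
theorem stmt7 (q n : ℕ) (hq : 3 ≤ q) (hn : 3 ≤ n) :
    ∃ (s : ℕ → ℕ) (t1 t2 d1 d2 : ℕ),
      q ^ n ≤
        {x : List ℕ | memCodeC q n s t1 t2 d1 d2 x}.ncard *
          (4 ^ (q - 1) * n * 2 * (q * n) * (2 * n - 3)) := by
  have : NeZero n := ⟨by omega⟩
  have : NeZero (q * n) := ⟨by positivity⟩
  have : NeZero (2 * n - 3) := ⟨by omega⟩
  obtain ⟨y, hy⟩ :=
    exists_card_le_card_fiber_mul_card fun w : Fin n → Fin q => syndrome q n (toWord q n w)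
  obtain ⟨s, t1, t2, d1, d2, rfl⟩ := residues_surjective q n y
  refine ⟨s, t1, t2, d1, d2, ?_⟩
  rw [ncard_setOf_memCodeC (by omega), ← card_syndromeSpace]
  simpa using hy
end

section
/- Let q ≥ 3 and let δ = c_1 + c_2⌈log_q(n)⌉ with c_1, c_2 positive multiples of 4 satisfying (q^4/(q^4−1))^{c_1/4 − 1} ≥ q/(q−1) and (q^4/(q^4−1))^{c_2/4} ≥ q. There exists a constant c_3, depending only on c_1, c_2 and q (not on n), such that for every r = (r_1,r_2) ∈ Z_{2n} × Z_3 there is a function W mapping Σ_q^{n−1} to subsets of [1, n−1] with the following properties: |W(y)| ≤ c_3 (log_q n)^2 for every y, and whenever x ∈ D_1(n;r), 1 ≤ i ≤ n−1, and y = x_1⋯x_{i−1}(x_i⊕x_{i+1})x_{i+2}⋯x_n, the position i belongs to W(y). -/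
/-- Number of occurrences of the pattern `0011` as a substring of `z`. -/
def occ0011 (z : List ℕ) : ℕ :=
  ((List.range z.length).filter (fun i => (z.drop i).take 4 = [0, 0, 1, 1])).length

/-- A valid segment of length at most `δ`: it ends with `0011` and contains `0011`
exactly once as a substring. -/
def seg0011 (δ : ℕ) (z : List ℕ) : Prop :=
  [0, 0, 1, 1] <:+ z ∧ occ0011 z = 1 ∧ z.length ≤ δ

/-- `f`-value of a segmentation: `Σ_j j·|z_j|` (1-indexed). -/
def fseg (zs : List (List ℕ)) : ℕ :=
  ∑ j ∈ Finset.range zs.length, (j + 1) * (zs.getD j []).length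

/-- Membership in the code `D_1(n;r)`: `x ∈ R_{q,n}` whose (unique) segmentation satisfies
`f(x) ≡ r_1 (mod 2n)` and `g(x) = l_x ≡ r_2 (mod 3)`. -/
def memD1 (q n δ r1 r2 : ℕ) (x : List ℕ) : Prop :=
  x.length = n ∧ (∀ a ∈ x, a < q) ∧ [0, 0, 1, 1] <:+ x ∧
    ∃ zs : List (List ℕ), x = zs.flatten ∧ (∀ z ∈ zs, seg0011 δ z) ∧
      fseg zs ≡ r1 [MOD 2 * n] ∧ zs.length ≡ r2 [MOD 3]

namespace S9

def hasPat (z : List ℕ) (m : ℕ) : Prop := (z.drop m).take 4 = [0,0,1,1]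

instance (z m) : Decidable (hasPat z m) := inferInstanceAs (Decidable (_ = _))

def OccS (z : List ℕ) : Finset ℕ := (Finset.range z.length).filter (fun m => hasPat z m)

lemma hasPat_iff_exists {z m} : hasPat z m ↔ ∃ r, z.drop m = 0::0::1::1::r := by
  constructor
  · intro h
    refine ⟨(z.drop m).drop 4, ?_⟩
    conv_lhs => rw [← List.take_append_drop 4 (z.drop m)]
    rw [h]; rfl
  · rintro ⟨r, hr⟩
    unfold hasPat
    rw [hr]; rfl

lemma hasPat_len {z m} (h : hasPat z m) : m + 4 ≤ z.length := by
  obtain ⟨r, hr⟩ := hasPat_iff_exists.mp h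
  have h1 : (z.drop m).length = z.length - m := List.length_drop
  have h2 : m ≤ z.length := by
    by_contra hc
    push_neg at hc
    rw [List.drop_eq_nil_of_le (le_of_lt hc)] at hr
    simp at hr
  rw [hr] at h1
  simp at h1
  omega

lemma hasPat_get {z m} (h : hasPat z m) :
    z[m]? = some 0 ∧ z[m+1]? = some 0 ∧ z[m+2]? = some 1 ∧ z[m+3]? = some 1 := by
  obtain ⟨r, hr⟩ := hasPat_iff_exists.mp h
  have : ∀ j, z[m+j]? = (z.drop m)[j]? := by
    intro j; rw [List.getElem?_drop]
  refine ⟨?_, ?_, ?_, ?_⟩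
  · rw [show m = m + 0 from rfl, this 0, hr]; simp
  · rw [this 1, hr]; simp
  · rw [this 2, hr]; simp
  · rw [this 3, hr]; simp

lemma hasPat_spacing {z m m'} (h : hasPat z m) (h' : hasPat z m') (hlt : m < m') :
    m + 4 ≤ m' := by
  by_contra hc
  push_neg at hc
  obtain ⟨a0, a1, a2, a3⟩ := hasPat_get h
  obtain ⟨b0, b1, b2, b3⟩ := hasPat_get h'
  have : m' = m + 1 ∨ m' = m + 2 ∨ m' = m + 3 := by omega
  rcases this with rfl | rfl | rfl
  · rw [show m+1+1 = m+2 from rfl] at b1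
    rw [a2] at b1; simp at b1
  · rw [a2] at b0; simp at b0
  · rw [a3] at b0; simp at b0

lemma mem_OccS {z m} : m ∈ OccS z ↔ hasPat z m := by
  unfold OccS
  simp only [Finset.mem_filter, Finset.mem_range]
  constructor
  · exact fun h => h.2
  · intro h; exact ⟨by have := hasPat_len h; omega, h⟩

lemma occ0011_eq_card (z : List ℕ) : occ0011 z = (OccS z).card := rfl

lemma hasPat_suffix {z : List ℕ} (h : [0,0,1,1] <:+ z) : hasPat z (z.length - 4) := by
  obtain ⟨w, hw⟩ := h
  have hlen : z.length = w.length + 4 := by rw [← hw]; simp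
  unfold hasPat
  have h2 : z.length - 4 = w.length := by omega
  rw [h2, ← hw, List.drop_left]
  rfl

lemma hasPat_append_left {u v : List ℕ} {m} (hm : m + 4 ≤ u.length) :
    hasPat (u ++ v) m ↔ hasPat u m := by
  unfold hasPat
  rw [List.drop_append_of_le_length (by omega)]
  rw [List.take_append_of_le_length (by simp; omega)]

lemma hasPat_append_right {u v : List ℕ} {m} (hm : u.length ≤ m) :
    hasPat (u ++ v) m ↔ hasPat v (m - u.length) := by
  unfold hasPat
  obtain ⟨i, rfl⟩ := Nat.exists_eq_add_of_le hm
  rw [List.drop_append]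
  simp
  rw [List.drop_eq_nil_of_le (by omega : u.length ≤ u.length + i)]
  simp


lemma OccS_single {z : List ℕ} (hsuf : [0,0,1,1] <:+ z) (hocc : occ0011 z = 1) :
    OccS z = {z.length - 4} := by
  have h4 : 4 ≤ z.length := hsuf.length_le
  have hmem : z.length - 4 ∈ OccS z := mem_OccS.mpr (hasPat_suffix hsuf)
  rw [occ0011_eq_card] at hocc
  obtain ⟨a, ha⟩ := Finset.card_eq_one.mp hocc
  rw [ha] at hmem ⊢
  simp at hmem
  rw [hmem]

lemma OccS_append {z w : List ℕ} (hsuf : [0,0,1,1] <:+ z) (hocc : occ0011 z = 1) :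
    OccS (z ++ w) = insert (z.length - 4) ((OccS w).image (· + z.length)) := by
  have h4 : 4 ≤ z.length := hsuf.length_le
  have hend : hasPat (z ++ w) (z.length - 4) := by
    rw [hasPat_append_left (by omega)]
    exact hasPat_suffix hsuf
  ext m
  simp only [mem_OccS, Finset.mem_insert, Finset.mem_image]
  constructor
  · intro h
    rcases le_or_gt (m + 4) z.length with hm | hm
    · left
      have : hasPat z m := (hasPat_append_left hm).mp h
      have : m ∈ OccS z := mem_OccS.mpr this
      rw [OccS_single hsuf hocc] at this
      simpa using this
    · rcases le_or_gt z.length m with hm2 | hm2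
      · right
        refine ⟨m - z.length, (hasPat_append_right hm2).mp h, by omega⟩
      · -- straddle: z.length - 4 < m < z.length
        exfalso
        have := hasPat_spacing hend h (by omega)
        omega
  · rintro (rfl | ⟨m', hm', rfl⟩)
    · exact hend
    · have h'' := hasPat_len hm'
      rw [hasPat_append_right (by omega)]
      simpa using hm'

lemma fseg_cons (z : List ℕ) (zs : List (List ℕ)) :
    fseg (z :: zs) = z.length + zs.flatten.length + fseg zs := by
  have hlen : ∀ (ws : List (List ℕ)), ∑ j ∈ Finset.range ws.length, (ws.getD j []).length = ws.flatten.length := by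
    intro ws
    induction ws with
    | nil => simp
    | cons a t ih =>
      rw [List.length_cons, Finset.sum_range_succ']
      simp only [List.getD_cons_succ, List.getD_cons_zero]
      rw [ih]
      simp [Nat.add_comm]
  unfold fseg
  rw [List.length_cons, Finset.sum_range_succ']
  simp only [List.getD_cons_succ, List.getD_cons_zero]
  have : ∀ j, (j + 1 + 1) * (zs.getD j []).length = (j+1) * (zs.getD j []).length + (zs.getD j []).length := by
    intro j; ring
  rw [Finset.sum_congr rfl (fun j _ => this j), Finset.sum_add_distrib, hlen]
  ring

/-- Main structural induction. -/
theorem seg_struct (δ : ℕ) : ∀ zs : List (List ℕ), (∀ z ∈ zs, seg0011 δ z) →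
    (OccS zs.flatten).card = zs.length
    ∧ fseg zs + ∑ m ∈ OccS zs.flatten, (m + 4) = (zs.length + 1) * zs.flatten.length
    ∧ (∀ t < zs.flatten.length, ∃ lo hi, lo ≤ t ∧ t < hi ∧ hi ≤ lo + δ ∧
        (4 ≤ hi ∧ hi - 4 ∈ OccS zs.flatten) ∧ (lo = 0 ∨ (4 ≤ lo ∧ lo - 4 ∈ OccS zs.flatten))) := by
  intro zs
  induction zs with
  | nil => intro _; refine ⟨by simp [OccS], by simp [OccS, fseg], by simp⟩
  | cons z t ih =>
    intro hseg
    have hz := hseg z (by simp)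
    obtain ⟨hsuf, hocc, hδ⟩ := hz
    have h4 : 4 ≤ z.length := hsuf.length_le
    have ht := ih (fun w hw => hseg w (by simp [hw]))
    obtain ⟨ihcard, ihsum, ihgap⟩ := ht
    have hO : OccS (z :: t).flatten = insert (z.length - 4) ((OccS t.flatten).image (· + z.length)) := by
      rw [List.flatten_cons]
      exact OccS_append hsuf hocc
    have hnotmem : z.length - 4 ∉ (OccS t.flatten).image (· + z.length) := by
      simp only [Finset.mem_image, not_exists]
      rintro a ⟨ha, hc⟩
      omega
    have hinj : Set.InjOn (· + z.length) (OccS t.flatten) := by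
      intro a _ b _ h
      simpa using h
    have hcard : (OccS (z :: t).flatten).card = t.length + 1 := by
      rw [hO, Finset.card_insert_of_notMem hnotmem, Finset.card_image_of_injOn hinj, ihcard]
    refine ⟨hcard, ?_, ?_⟩
    · -- sum identity
      have hsum : ∑ m ∈ OccS (z :: t).flatten, (m + 4)
          = (z.length - 4 + 4) + ∑ m ∈ OccS t.flatten, (m + z.length + 4) := by
        rw [hO, Finset.sum_insert hnotmem, Finset.sum_image (fun a ha b hb h => hinj ha hb h)]
      have hsum2 : ∑ m ∈ OccS t.flatten, (m + z.length + 4)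
          = (∑ m ∈ OccS t.flatten, (m + 4)) + t.length * z.length := by
        rw [Finset.sum_congr rfl (fun m _ => show m + z.length + 4 = (m + 4) + z.length by ring),
          Finset.sum_add_distrib, Finset.sum_const, smul_eq_mul, ihcard]
      rw [hsum, hsum2, fseg_cons]
      have h44 : z.length - 4 + 4 = z.length := by omega
      rw [h44]
      simp only [List.flatten_cons, List.length_append, List.length_cons]
      zify at ihsum ⊢
      linear_combination ihsum
    · -- gap fact
      intro s hs
      simp only [List.flatten_cons, List.length_append] at hs
      rcases lt_or_ge s z.length with hc | hc
      · refine ⟨0, z.length, by omega, hc, by omega, ⟨h4, ?_⟩, Or.inl rfl⟩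
        rw [hO]; simp
      · obtain ⟨lo, hi, h1, h2, h3, ⟨h5, h6⟩, h7⟩ := ihgap (s - z.length) (by omega)
        refine ⟨lo + z.length, hi + z.length, by omega, by omega, by omega, ⟨by omega, ?_⟩, ?_⟩
        · rw [hO]
          simp only [Finset.mem_insert, Finset.mem_image]
          right
          exact ⟨hi - 4, h6, by omega⟩
        · rcases h7 with rfl | ⟨h8, h9⟩
          · right
            refine ⟨by omega, ?_⟩
            rw [hO]
            simp only [Finset.mem_insert]
            left; omega
          · right
            refine ⟨by omega, ?_⟩
            rw [hO]
            simp only [Finset.mem_insert, Finset.mem_image]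
            right
            exact ⟨lo - 4, h9, by omega⟩


/-- counting data from the received word `y` -/
noncomputable def aY (y : List ℕ) (p : ℕ) : ℕ := ((OccS y).filter (fun e => e + 4 ≤ p)).card
noncomputable def AY (y : List ℕ) (p : ℕ) : ℕ := ∑ e ∈ (OccS y).filter (fun e => e + 4 ≤ p), e
noncomputable def bY (y : List ℕ) (p : ℕ) : ℕ := ((OccS y).filter (fun e => p + 1 ≤ e)).card
noncomputable def BY (y : List ℕ) (p : ℕ) : ℕ := ∑ e ∈ (OccS y).filter (fun e => p + 1 ≤ e), e

noncomputable def XY (n : ℕ) (y : List ℕ) (p k σ : ℕ) : ℤ :=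
  (aY y p + bY y p + k + 1) * n - AY y p - 4 * aY y p - BY y p - 5 * bY y p - σ - 4 * k

def Cond (n δ r1 : ℕ) (y : List ℕ) (p k σ : ℕ) : Prop :=
  4 ≤ n ∧ p + 2 ≤ n ∧ k ≤ 2 ∧ k * p ≤ σ + 3 * k ∧ σ ≤ k * (p + 1) ∧
    (k = 2 → σ + 2 = 2 * p) ∧
    ((2 * (n:ℤ)) ∣ (XY n y p k σ - r1)) ∧
    (k = 0 → p + 6 ≤ δ ∨ ∃ e ∈ OccS y, e + 4 ≤ p ∧ p + 2 ≤ e + δ)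

theorem extract (q n δ r1 r2 : ℕ) (x : List ℕ) (hx : memD1 q n δ r1 r2 x)
    (i : ℕ) (h1 : 1 ≤ i) (h2 : i ≤ n - 1) :
    ∃ k σ, Cond n δ r1
      (x.take (i - 1) ++ vplus q (x.getD (i - 1) 0) (x.getD i 0) :: x.drop (i + 1)) (i - 1) k σ := by
  obtain ⟨hlen, hlt, hsuf, zs, hflat, hsegs, hf, hg⟩ := hx
  have hn4 : 4 ≤ n := by have h := hsuf.length_le; simp [hlen] at h; omega
  set p := i - 1 with hp
  have hip : i = p + 1 := by omega
  have hpn : p + 2 ≤ n := by omega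
  set v := vplus q (x.getD (i - 1) 0) (x.getD i 0) with hv
  set y := x.take (i - 1) ++ v :: x.drop (i + 1) with hy
  have hy' : y = x.take p ++ v :: x.drop (p + 2) := by rw [hy, hp, hip]; norm_num
  have hy'' : y = (x.take p ++ [v]) ++ x.drop (p + 2) := by
    rw [hy']; simp
  have hlt1 : (x.take p).length = p := by
    rw [List.length_take]; omega
  have hlt2 : (x.take (p+2)).length = p + 2 := by
    rw [List.length_take]; omega
  have hlt3 : (x.take p ++ [v]).length = p + 1 := by simp [hlt1]
  -- correspondence
  have corrL : ∀ m, m + 4 ≤ p → (hasPat x m ↔ hasPat y m) := by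
    intro m hm
    have hx1 : hasPat x m ↔ hasPat (x.take p) m := by
      conv_lhs => rw [← List.take_append_drop p x]
      exact hasPat_append_left (by omega)
    have hy1 : hasPat y m ↔ hasPat (x.take p) m := by
      rw [hy']
      exact hasPat_append_left (by omega)
    rw [hx1, hy1]
  have corrR : ∀ m, p + 2 ≤ m → (hasPat x m ↔ hasPat y (m - 1)) := by
    intro m hm
    have hx1 : hasPat x m ↔ hasPat (x.drop (p+2)) (m - (p+2)) := by
      conv_lhs => rw [← List.take_append_drop (p+2) x]
      rw [hasPat_append_right (by omega)]
      rw [hlt2]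
    have hy1 : hasPat y (m-1) ↔ hasPat (x.drop (p+2)) (m - 1 - (p+1)) := by
      rw [hy'']
      rw [hasPat_append_right (by rw [hlt3]; omega)]
      rw [hlt3]
    rw [hx1, hy1]
    have : m - (p+2) = m - 1 - (p+1) := by omega
    rw [this]
  -- the window set
  set S : Finset ℕ := (OccS x).filter (fun m => p ≤ m + 3 ∧ m ≤ p + 1) with hS
  set k := S.card with hk
  set σ := ∑ m ∈ S, m with hσ
  have hSwin : ∀ m ∈ S, p ≤ m + 3 ∧ m ≤ p + 1 := by
    intro m hm; exact (Finset.mem_filter.mp hm).2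
  have hSocc : ∀ m ∈ S, hasPat x m := by
    intro m hm; exact mem_OccS.mp (Finset.mem_filter.mp hm).1
  have hSspace : ∀ m ∈ S, ∀ m' ∈ S, m ≠ m' → m + 4 ≤ m' ∨ m' + 4 ≤ m := by
    intro m hm m' hm' hne
    rcases lt_or_gt_of_ne hne with h | h
    · exact Or.inl (hasPat_spacing (hSocc m hm) (hSocc m' hm') h)
    · exact Or.inr (hasPat_spacing (hSocc m' hm') (hSocc m hm) h)
  have hk2 : k ≤ 2 := by
    by_contra hc
    push_neg at hc
    obtain ⟨m1, m2, m3, hm1, hm2, hm3, h12, h13, h23⟩ := Finset.two_lt_card_iff.mp hc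
    have w1 := hSwin m1 hm1; have w2 := hSwin m2 hm2; have w3 := hSwin m3 hm3
    have s12 := hSspace m1 hm1 m2 hm2 h12
    have s13 := hSspace m1 hm1 m3 hm3 h13
    have s23 := hSspace m2 hm2 m3 hm3 h23
    omega
  have hkk2 : k = 2 → σ + 2 = 2 * p := by
    intro h2'
    obtain ⟨m1, m2, hne, hS2⟩ := Finset.card_eq_two.mp (show S.card = 2 by omega)
    have hm1 : m1 ∈ S := by rw [hS2]; simp
    have hm2 : m2 ∈ S := by rw [hS2]; simp
    have w1 := hSwin m1 hm1; have w2 := hSwin m2 hm2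
    have s12 := hSspace m1 hm1 m2 hm2 hne
    have : σ = m1 + m2 := by show ∑ m ∈ S, m = m1 + m2; rw [hS2, Finset.sum_pair hne]
    omega
  have hσub : σ ≤ k * (p + 1) := by
    have h := Finset.sum_le_card_nsmul S (fun m => m) (p+1) (fun m hm => (hSwin m hm).2)
    simp only [smul_eq_mul] at h
    exact h
  have hσlb : k * p ≤ σ + 3 * k := by
    have h := Finset.card_nsmul_le_sum S (fun m => m + 3) p (fun m hm => (hSwin m hm).1)
    rw [Finset.sum_add_distrib, Finset.sum_const] at h
    simp only [smul_eq_mul] at h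
    have h2 : (∑ m ∈ S, m) = σ := rfl
    have h3 : S.card = k := rfl
    rw [h2, h3] at h
    linarith
  -- structure facts
  have hst := seg_struct δ zs hsegs
  rw [← hflat] at hst
  obtain ⟨hcard, hsum, hgap⟩ := hst
  have hxlen : x.length = n := hlen
  -- decomposition of OccS x
  set L : Finset ℕ := (OccS x).filter (fun m => m + 4 ≤ p) with hL
  set R : Finset ℕ := (OccS x).filter (fun m => p + 2 ≤ m) with hR
  have hdecomp : OccS x = L ∪ S ∪ R := by
    ext m
    simp only [hL, hS, hR, Finset.mem_union, Finset.mem_filter]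
    constructor
    · intro h
      rcases le_or_gt (m+4) p with h' | h'
      · exact Or.inl (Or.inl ⟨h, h'⟩)
      · rcases le_or_gt m (p+1) with h'' | h''
        · exact Or.inl (Or.inr ⟨h, by omega, h''⟩)
        · exact Or.inr ⟨h, by omega⟩
    · rintro ((⟨h, _⟩ | ⟨h, _⟩) | ⟨h, _⟩) <;> exact h
  have hdisj1 : Disjoint L S := by
    rw [Finset.disjoint_left]
    intro m hm hm'
    have := (Finset.mem_filter.mp hm).2
    have := (Finset.mem_filter.mp hm').2
    omega
  have hdisj2 : Disjoint (L ∪ S) R := by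
    rw [Finset.disjoint_left]
    intro m hm hm'
    have h' := (Finset.mem_filter.mp hm').2
    rcases Finset.mem_union.mp hm with h | h
    · have := (Finset.mem_filter.mp h).2; omega
    · have := (Finset.mem_filter.mp h).2; omega
  -- identification with y-side sets
  have hLE : L = (OccS y).filter (fun e => e + 4 ≤ p) := by
    ext m
    simp only [hL, Finset.mem_filter, mem_OccS]
    constructor
    · rintro ⟨h, h'⟩; exact ⟨(corrL m h').mp h, h'⟩
    · rintro ⟨h, h'⟩; exact ⟨(corrL m h').mpr h, h'⟩
  have hRE : R = ((OccS y).filter (fun e => p + 1 ≤ e)).image (· + 1) := by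
    ext m
    simp only [hR, Finset.mem_filter, Finset.mem_image, mem_OccS]
    constructor
    · rintro ⟨h, h'⟩
      refine ⟨m - 1, ⟨(corrR m h').mp h, by omega⟩, by omega⟩
    · rintro ⟨e, ⟨he, he'⟩, rfl⟩
      have : e + 1 - 1 = e := by omega
      refine ⟨(corrR (e+1) (by omega)).mpr (by rw [this]; exact he), by omega⟩
  have hRinj : ∀ x_1 ∈ (OccS y).filter (fun e => p + 1 ≤ e), ∀ y_1 ∈ (OccS y).filter (fun e => p + 1 ≤ e),
      x_1 + 1 = y_1 + 1 → x_1 = y_1 := by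
    intro a _ b _ h; omega
  have hRcard : R.card = bY y p := by
    rw [hRE, bY, Finset.card_image_of_injOn (fun a _ b _ h => by simpa using h)]
  have hRsum : ∑ m ∈ R, (m + 4) = BY y p + 5 * bY y p := by
    rw [hRE, Finset.sum_image hRinj, BY, bY]
    rw [Finset.sum_congr rfl (fun e _ => show e + 1 + 4 = e + 5 from rfl), Finset.sum_add_distrib,
      Finset.sum_const, smul_eq_mul]
    ring
  have hLcard : L.card = aY y p := by rw [hLE, aY]
  have hLsum : ∑ m ∈ L, (m + 4) = AY y p + 4 * aY y p := by
    rw [hLE, AY, aY, Finset.sum_add_distrib, Finset.sum_const, smul_eq_mul]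
    ring
  have hScard_sum : ∑ m ∈ S, (m + 4) = σ + 4 * k := by
    rw [hσ, hk, Finset.sum_add_distrib, Finset.sum_const, smul_eq_mul]
    ring
  -- assemble the sum identity
  have hsum2 : ∑ m ∈ OccS x, (m + 4) = (AY y p + 4 * aY y p) + (σ + 4 * k) + (BY y p + 5 * bY y p) := by
    rw [hdecomp, Finset.sum_union hdisj2, Finset.sum_union hdisj1, hLsum, hScard_sum, hRsum]
  have hcard2 : (OccS x).card = aY y p + k + bY y p := by
    rw [hdecomp, Finset.card_union_of_disjoint hdisj2, Finset.card_union_of_disjoint hdisj1,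
      hLcard, hRcard]
  have hfseg : (fseg zs : ℤ) = XY n y p k σ := by
    rw [hxlen] at hsum
    rw [hcard2] at hcard
    have : fseg zs + ((AY y p + 4 * aY y p) + (σ + 4 * k) + (BY y p + 5 * bY y p))
        = (aY y p + k + bY y p + 1) * n := by
      rw [← hsum2, hsum, hcard]
    rw [XY]
    push_cast
    push_cast at this
    linarith [this]
  have hdvd : (2 * (n:ℤ)) ∣ (XY n y p k σ - r1) := by
    have hmod : (fseg zs : ℤ) ≡ (r1 : ℤ) [ZMOD ((2*n : ℕ) : ℤ)] := Int.natCast_modEq_iff.mpr hf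
    have hd := hmod.dvd
    rw [hfseg] at hd
    have hd2 := dvd_neg.mpr hd
    rw [neg_sub] at hd2
    have : ((2*n : ℕ) : ℤ) = 2 * (n : ℤ) := by push_cast; ring
    rwa [this] at hd2
  have hk0 : k = 0 → p + 6 ≤ δ ∨ ∃ e ∈ OccS y, e + 4 ≤ p ∧ p + 2 ≤ e + δ := by
    intro hk0'
    have hSempty : S = ∅ := Finset.card_eq_zero.mp (by omega)
    obtain ⟨lo, hi, hg1, hg2, hg3, ⟨hg4, hg5⟩, hg6⟩ := hgap (p+1) (by omega)
    have hhi : p + 6 ≤ hi := by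
      by_contra hc
      push_neg at hc
      have hwin : hi - 4 ∈ S := by
        rw [hS, Finset.mem_filter]
        exact ⟨hg5, by omega, by omega⟩
      rw [hSempty] at hwin
      simp at hwin
    rcases hg6 with rfl | ⟨hlo4, hlo⟩
    · left; omega
    · right
      have hlop : lo ≤ p := by
        by_contra hc
        push_neg at hc
        have : lo = p + 1 := by omega
        have hwin : lo - 4 ∈ S := by
          rw [hS, Finset.mem_filter]
          exact ⟨hlo, by omega, by omega⟩
        rw [hSempty] at hwin
        simp at hwin
      refine ⟨lo - 4, ?_, by omega, by omega⟩
      rw [mem_OccS]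
      have := mem_OccS.mp hlo
      exact (corrL (lo - 4) (by omega)).mp this
  exact ⟨k, σ, hn4, hpn, hk2, hσlb, hσub, hkk2, hdvd, hk0⟩


noncomputable def eY (y : List ℕ) (p : ℕ) : ℕ := ((OccS y).filter (fun e => p ≤ e + 3 ∧ e ≤ p)).card
noncomputable def hY (y : List ℕ) (p : ℕ) : ℕ :=
  ∑ e ∈ (OccS y).filter (fun e => p ≤ e + 3 ∧ e ≤ p), (e + 3 - p)


lemma spaced_card_le {s : Finset ℕ} {lo hi : ℕ}
    (hsub : ∀ e ∈ s, lo ≤ e ∧ e ≤ hi)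
    (hsp : ∀ e ∈ s, ∀ e' ∈ s, e < e' → e + 4 ≤ e') :
    s.card ≤ (hi - lo) / 4 + 1 := by
  have : s.card ≤ (Finset.range ((hi - lo)/4 + 1)).card := by
    apply Finset.card_le_card_of_injOn (fun e => (e - lo)/4)
    · intro e he
      have := hsub e he
      simp only [Finset.mem_coe, Finset.mem_range]
      omega
    · intro e he e' he' hee
      simp only at hee
      by_contra hne
      rcases lt_or_gt_of_ne hne with h | h
      · have := hsp e (by simpa using he) e' (by simpa using he') h
        have h1 := hsub e (by simpa using he)
        have h2 := hsub e' (by simpa using he')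
        omega
      · have := hsp e' (by simpa using he') e (by simpa using he) h
        have h1 := hsub e (by simpa using he)
        have h2 := hsub e' (by simpa using he')
        omega
  simpa using this

lemma eY_le_one (y : List ℕ) (p : ℕ) : eY y p ≤ 1 := by
  by_contra hc
  push_neg at hc
  obtain ⟨e, he, e', he', hne⟩ := Finset.one_lt_card.mp hc
  have h1 := Finset.mem_filter.mp he
  have h2 := Finset.mem_filter.mp he'
  rcases lt_or_gt_of_ne hne with h | h
  · have := hasPat_spacing (mem_OccS.mp h1.1) (mem_OccS.mp h2.1) h
    omega
  · have := hasPat_spacing (mem_OccS.mp h2.1) (mem_OccS.mp h1.1) h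
    omega

lemma hY_le_three (y : List ℕ) (p : ℕ) : hY y p ≤ 3 := by
  have h1 := Finset.sum_le_card_nsmul ((OccS y).filter (fun e => p ≤ e + 3 ∧ e ≤ p))
    (fun e => e + 3 - p) 3 (fun e he => by
      have h := (Finset.mem_filter.mp he).2
      show e + 3 - p ≤ 3
      omega)
  have h2 := eY_le_one y p
  unfold hY
  unfold eY at h2
  simp only [smul_eq_mul] at h1
  omega

/-- The key pairwise lemma. -/
lemma pair_lemma (n δ r1 : ℕ) (y : List ℕ) (p p' k σ σ' : ℕ)
    (hc : Cond n δ r1 y p k σ) (hc' : Cond n δ r1 y p' k σ')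
    (hj : σ + 3 * k + k * p' = σ' + 3 * k + k * p)
    (hεe : eY y p = eY y p') (hηe : hY y p = hY y p')
    (hΔ : p + 4 ≤ p') : p' ≤ p + δ := by
  obtain ⟨hn4, hpn, hk2, hσlb, hσub, hkk2, hdvd, hk0⟩ := hc
  obtain ⟨-, hpn', -, hσlb', hσub', hkk2', hdvd', hk0'⟩ := hc'
  set E := OccS y with hE
  have hEsp : ∀ e ∈ E, ∀ e' ∈ E, e < e' → e + 4 ≤ e' :=
    fun e he e' he' h => hasPat_spacing (mem_OccS.mp he) (mem_OccS.mp he') h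
  set wp : Finset ℕ := E.filter (fun e => p ≤ e + 3 ∧ e ≤ p) with hwp
  set wp' : Finset ℕ := E.filter (fun e => p' ≤ e + 3 ∧ e ≤ p') with hwp'
  set C : Finset ℕ := E.filter (fun e => p + 1 ≤ e ∧ e + 4 ≤ p') with hC
  -- decomposition of the left filters
  have hFa : E.filter (fun e => e + 4 ≤ p') = (E.filter (fun e => e + 4 ≤ p) ∪ wp) ∪ C := by
    ext e
    simp only [hwp, hC, Finset.mem_union, Finset.mem_filter]
    constructor
    · rintro ⟨he, h⟩
      rcases le_or_gt (e + 4) p with h' | h'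
      · exact Or.inl (Or.inl ⟨he, h'⟩)
      · rcases le_or_gt e p with h'' | h''
        · exact Or.inl (Or.inr ⟨he, by omega, h''⟩)
        · exact Or.inr ⟨he, by omega, h⟩
    · rintro ((⟨he, h⟩ | ⟨he, h1, h2⟩) | ⟨he, h1, h2⟩) <;> exact ⟨he, by omega⟩
  have hdj1 : Disjoint (E.filter (fun e => e + 4 ≤ p)) wp := by
    rw [Finset.disjoint_left]
    intro e he he'
    have := (Finset.mem_filter.mp he).2
    have := (Finset.mem_filter.mp he').2
    omega
  have hdj2 : Disjoint (E.filter (fun e => e + 4 ≤ p) ∪ wp) C := by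
    rw [Finset.disjoint_left]
    intro e he he'
    have h2 := (Finset.mem_filter.mp he').2
    rcases Finset.mem_union.mp he with h | h
    · have := (Finset.mem_filter.mp h).2; omega
    · have := (Finset.mem_filter.mp h).2; omega
  -- decomposition of the right filters
  have hFb : E.filter (fun e => p + 1 ≤ e) = (E.filter (fun e => p' + 1 ≤ e) ∪ wp') ∪ C := by
    ext e
    simp only [hwp', hC, Finset.mem_union, Finset.mem_filter]
    constructor
    · rintro ⟨he, h⟩
      rcases le_or_gt (p' + 1) e with h' | h'
      · exact Or.inl (Or.inl ⟨he, h'⟩)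
      · rcases le_or_gt (e + 4) p' with h'' | h''
        · exact Or.inr ⟨he, h, h''⟩
        · exact Or.inl (Or.inr ⟨he, by omega, by omega⟩)
    · rintro ((⟨he, h⟩ | ⟨he, h1, h2⟩) | ⟨he, h1, h2⟩) <;> exact ⟨he, by omega⟩
  have hdj3 : Disjoint (E.filter (fun e => p' + 1 ≤ e)) wp' := by
    rw [Finset.disjoint_left]
    intro e he he'
    have := (Finset.mem_filter.mp he).2
    have := (Finset.mem_filter.mp he').2
    omega
  have hdj4 : Disjoint (E.filter (fun e => p' + 1 ≤ e) ∪ wp') C := by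
    rw [Finset.disjoint_left]
    intro e he he'
    have h2 := (Finset.mem_filter.mp he').2
    rcases Finset.mem_union.mp he with h | h
    · have := (Finset.mem_filter.mp h).2; omega
    · have := (Finset.mem_filter.mp h).2; omega
  -- cardinal and sum equations (ℕ)
  have ha' : aY y p' = aY y p + eY y p + C.card := by
    unfold aY eY
    rw [hFa, Finset.card_union_of_disjoint hdj2, Finset.card_union_of_disjoint hdj1]
  have hA' : AY y p' = AY y p + (∑ e ∈ wp, e) + (∑ e ∈ C, e) := by
    unfold AY
    rw [hFa, Finset.sum_union hdj2, Finset.sum_union hdj1]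
  have hb' : bY y p = bY y p' + eY y p' + C.card := by
    unfold bY eY
    rw [hFb, Finset.card_union_of_disjoint hdj4, Finset.card_union_of_disjoint hdj3]
  have hB' : BY y p = BY y p' + (∑ e ∈ wp', e) + (∑ e ∈ C, e) := by
    unfold BY
    rw [hFb, Finset.sum_union hdj4, Finset.sum_union hdj3]
  -- window sums in terms of hY, eY
  have hwsum : ∀ P : ℕ, ∀ w : Finset ℕ, (∀ e ∈ w, P ≤ e + 3) →
      (∑ e ∈ w, e) + 3 * w.card = (∑ e ∈ w, (e + 3 - P)) + w.card * P := by
    intro P w hw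
    have : ∑ e ∈ w, (e + 3) = ∑ e ∈ w, ((e + 3 - P) + P) :=
      Finset.sum_congr rfl (fun e he => by have := hw e he; omega)
    rw [Finset.sum_add_distrib, Finset.sum_const, smul_eq_mul] at this
    rw [Finset.sum_add_distrib, Finset.sum_const, smul_eq_mul] at this
    omega
  have hwsum1 : (∑ e ∈ wp, e) + 3 * eY y p = hY y p + eY y p * p := by
    have := hwsum p wp (fun e he => (Finset.mem_filter.mp he).2.1)
    unfold hY eY
    exact this
  have hwsum2 : (∑ e ∈ wp', e) + 3 * eY y p' = hY y p' + eY y p' * p' := by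
    have := hwsum p' wp' (fun e he => (Finset.mem_filter.mp he).2.1)
    unfold hY eY
    exact this
  -- the difference of X values
  have hdvdΔ : (2 * (n:ℤ)) ∣ (XY n y p' k σ' - XY n y p k σ) := by
    have := dvd_sub hdvd' hdvd
    simpa using this
  have hXdiff : XY n y p' k σ' - XY n y p k σ
      = (C.card : ℤ) + (eY y p : ℤ) * ((p' : ℤ) - p) + eY y p - (k : ℤ) * ((p' : ℤ) - p) := by
    unfold XY
    have e1 : (aY y p' : ℤ) = aY y p + eY y p + C.card := by exact_mod_cast ha'
    have e2 : (AY y p' : ℤ) = AY y p + (∑ e ∈ wp, e) + (∑ e ∈ C, e) := by exact_mod_cast hA'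
    have e3 : (bY y p : ℤ) = bY y p' + eY y p' + C.card := by exact_mod_cast hb'
    have e4 : (BY y p : ℤ) = BY y p' + (∑ e ∈ wp', e) + (∑ e ∈ C, e) := by exact_mod_cast hB'
    have e5 : (σ' : ℤ) = σ + k * p' - k * p := by
      have : (σ : ℤ) + 3 * k + k * p' = σ' + 3 * k + k * p := by exact_mod_cast hj
      linarith
    have e6 : ((∑ e ∈ wp, e : ℕ) : ℤ) = hY y p + (eY y p) * p - 3 * eY y p := by
      have : ((∑ e ∈ wp, e) + 3 * eY y p : ℤ) = hY y p + (eY y p) * p := by exact_mod_cast hwsum1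
      push_cast at this ⊢
      linarith
    have e7 : ((∑ e ∈ wp', e : ℕ) : ℤ) = hY y p' + (eY y p') * p' - 3 * eY y p' := by
      have : ((∑ e ∈ wp', e) + 3 * eY y p' : ℤ) = hY y p' + (eY y p') * p' := by exact_mod_cast hwsum2
      push_cast at this ⊢
      linarith
    rw [e1, e2, e3, e4, e5, e6, e7, ← hεe, ← hηe]
    push_cast
    ring
  -- bound on C.card
  have hCb : C.card ≤ (p' - 4 - (p + 1)) / 4 + 1 := by
    apply spaced_card_le (lo := p + 1) (hi := p' - 4)
    · intro e he
      have := (Finset.mem_filter.mp he).2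
      omega
    · intro e he e' he' hlt
      exact hEsp e (Finset.mem_filter.mp he).1 e' (Finset.mem_filter.mp he').1 hlt
  -- case analysis
  have hε01 : eY y p = 0 ∨ eY y p = 1 := by have := eY_le_one y p; omega
  have habs : XY n y p' k σ' - XY n y p k σ = 0 := by
    apply Int.eq_zero_of_abs_lt_dvd hdvdΔ
    rw [hXdiff, abs_lt]
    rcases hε01 with hε | hε <;> rw [hε] <;>
      (constructor <;> push_cast <;>
        rcases (show k = 0 ∨ k = 1 ∨ k = 2 by omega) with hk | hk | hk <;> rw [hk] <;>
          push_cast <;> omega)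
  rw [hXdiff] at habs
  rcases (show k = 0 ∨ k = 1 ∨ k = 2 by omega) with hk | hk | hk
  · -- k = 0 : use the gap information at p'
    rw [hk] at habs
    rcases hε01 with hε | hε <;> rw [hε] at habs <;> push_cast at habs
    swap
    · omega
    -- now C.card = 0
    have hCzero : C = ∅ := by
      apply Finset.card_eq_zero.mp
      omega
    rcases hk0' hk with h | ⟨e, he, he1, he2⟩
    · omega
    · -- e ∈ E with e + 4 ≤ p' and p' + 2 ≤ e + δ ; show e ≤ p
      have hep : e ≤ p := by
        by_contra hcon
        push_neg at hcon
        have : e ∈ C := by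
          rw [hC, Finset.mem_filter]
          exact ⟨he, by omega, he1⟩
        rw [hCzero] at this
        simp at this
      omega
  · rw [hk] at habs
    rcases hε01 with hε | hε <;> rw [hε] at habs <;> push_cast at habs <;> omega
  · rw [hk] at habs
    rcases hε01 with hε | hε <;> rw [hε] at habs <;> push_cast at habs <;> omega


namespace Count

lemma diam_card (s : Finset ℕ) (D : ℕ) (h : ∀ a ∈ s, ∀ b ∈ s, a ≤ b → b ≤ a + D) :
    s.card ≤ D + 1 := by
  rcases s.eq_empty_or_nonempty with rfl | hne
  · simp
  · have hsub : s ⊆ Finset.Icc (s.min' hne) (s.min' hne + D) := by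
      intro a ha
      rw [Finset.mem_Icc]
      exact ⟨Finset.min'_le s a ha, h _ (s.min'_mem hne) a ha (Finset.min'_le s a ha)⟩
    have := Finset.card_le_card hsub
    rw [Nat.card_Icc] at this
    omega

lemma card_bound (n δ r1 : ℕ) (hδ4 : 4 ≤ δ) (y : List ℕ) (Feas : ℕ → Prop) [DecidablePred Feas]
    (hFeas : ∀ i, 1 ≤ i → i ≤ n - 1 → Feas i → ∃ k σ, S9.Cond n δ r1 y (i-1) k σ) :
    ((Finset.Icc 1 (n-1)).filter Feas).card ≤ 216 * (δ + 1) := by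
  classical
  set F := (Finset.Icc 1 (n-1)).filter Feas with hF
  have hex : ∀ i ∈ F, ∃ k σ, S9.Cond n δ r1 y (i-1) k σ := by
    intro i hi
    rw [hF, Finset.mem_filter, Finset.mem_Icc] at hi
    exact hFeas i hi.1.1 hi.1.2 hi.2
  set tp : ℕ → ℕ × ℕ × ℕ × ℕ := fun i =>
    if h : ∃ k σ, S9.Cond n δ r1 y (i-1) k σ then
      (h.choose, h.choose_spec.choose + 3 * h.choose - h.choose * (i-1), S9.eY y (i-1), S9.hY y (i-1))
    else (0,0,0,0) with htp
  set T : Finset (ℕ × ℕ × ℕ × ℕ) :=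
    Finset.range 3 ×ˢ Finset.range 9 ×ˢ Finset.range 2 ×ˢ Finset.range 4 with hT
  have htpval : ∀ i (h : ∃ k σ, S9.Cond n δ r1 y (i-1) k σ),
      tp i = (h.choose, h.choose_spec.choose + 3 * h.choose - h.choose * (i-1),
        S9.eY y (i-1), S9.hY y (i-1)) := by
    intro i h
    rw [htp]
    simp only [dif_pos h]
  have hmemT : ∀ i ∈ F, tp i ∈ T := by
    intro i hi
    have h := hex i hi
    rw [htpval i h, hT]
    have hc := h.choose_spec.choose_spec
    obtain ⟨-, -, hk2, hσlb, hσub, -, -, -⟩ := hc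
    have hmul : h.choose * (i - 1 + 1) = h.choose * (i-1) + h.choose := by ring
    simp only [Finset.mem_product, Finset.mem_range]
    refine ⟨by omega, by omega, by have := S9.eY_le_one y (i-1); omega,
      by have := S9.hY_le_three y (i-1); omega⟩
  have hcardsum := Finset.card_eq_sum_card_fiberwise hmemT
  have hfiber : ∀ τ ∈ T, (F.filter (fun i => tp i = τ)).card ≤ δ + 1 := by
    intro τ _
    apply diam_card
    intro a ha b hb hab
    rw [Finset.mem_filter] at ha hb
    have hexa := hex a ha.1
    have hexb := hex b hb.1
    have htpa := htpval a hexa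
    have htpb := htpval b hexb
    have htpe : tp a = tp b := by rw [ha.2, hb.2]
    rw [htpa, htpb] at htpe
    simp only [Prod.mk.injEq] at htpe
    obtain ⟨hk, hj, hε, hη⟩ := htpe
    rcases le_or_gt b (a + 3) with hb3 | hb3
    · omega
    · have ha1 : 1 ≤ a := by
        have := ha.1; rw [hF, Finset.mem_filter, Finset.mem_Icc] at this; exact this.1.1
      have hca := hexa.choose_spec.choose_spec
      have hcb := hexb.choose_spec.choose_spec
      have hcb' : S9.Cond n δ r1 y (b-1) hexa.choose (hexb.choose_spec.choose) := by
        rw [hk]; exact hcb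
      have hσlba := hca.2.2.2.1
      have hσlbb := hcb'.2.2.2.1
      have hbr1 : hexa.choose * (b-1) = hexb.choose * (b-1) := by rw [hk]
      have hbr2 : 3 * hexa.choose = 3 * hexb.choose := by rw [hk]
      have hjj : hexa.choose_spec.choose + 3 * hexa.choose + hexa.choose * (b-1)
          = hexb.choose_spec.choose + 3 * hexa.choose + hexa.choose * (a-1) := by
        omega
      have := S9.pair_lemma n δ r1 y (a-1) (b-1) hexa.choose hexa.choose_spec.choose
        hexb.choose_spec.choose hca hcb' hjj hε hη (by omega)
      omega
  have htot : ∑ τ ∈ T, (F.filter (fun i => tp i = τ)).card ≤ T.card * (δ + 1) := by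
    have := Finset.sum_le_card_nsmul T (fun τ => (F.filter (fun i => tp i = τ)).card) (δ + 1) hfiber
    simpa using this
  have hTcard : T.card = 216 := by
    rw [hT]
    simp [Finset.card_product]
  rw [hTcard] at htot
  omega

end Count

lemma clog_le_logb (q n : ℕ) (hq : 3 ≤ q) (hn : 2 ≤ n) :
    (Nat.clog q n : ℝ) ≤ Real.logb q n + 1 := by
  have hq1 : (1:ℝ) < q := by exact_mod_cast (by omega : 1 < q)
  rcases Nat.eq_zero_or_pos (Nat.clog q n) with h0 | h0
  · rw [h0]
    have : 0 ≤ Real.logb q n := Real.logb_nonneg hq1 (by exact_mod_cast (by omega : 1 ≤ n))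
    simp
    linarith
  · have hlt := Nat.pow_pred_clog_lt_self (by omega : 1 < q) (by omega : 1 < n)
    have hle : ((q ^ (Nat.clog q n - 1) : ℕ) : ℝ) ≤ (n : ℝ) := by exact_mod_cast le_of_lt hlt
    push_cast at hle
    have h2 : Real.logb q ((q:ℝ) ^ (Nat.clog q n - 1)) ≤ Real.logb q n :=
      Real.logb_le_logb_of_le hq1 (by positivity) hle
    rw [Real.logb_pow, Real.logb_self_eq_one hq1] at h2
    have hc : ((Nat.clog q n - 1 : ℕ) : ℝ) = (Nat.clog q n : ℝ) - 1 := by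
      rw [Nat.cast_sub h0]
      norm_num
    rw [hc] at h2
    linarith

lemma analytic (q c1 c2 n δcard : ℕ) (hq : 3 ≤ q) (hn : 2 ≤ n)
    (hδ : δcard ≤ 216 * (c1 + c2 * Nat.clog q n + 1)) :
    (δcard : ℝ) ≤ (216 * ((c1:ℝ) + c2 + 1) * (1 + 1/Real.logb q 2) * (1/Real.logb q 2) + 1)
      * (Real.logb q n) ^ 2 := by
  have hq1 : (1:ℝ) < q := by exact_mod_cast (by omega : 1 < q)
  set β := Real.logb q 2 with hβdef
  have hβ : 0 < β := Real.logb_pos hq1 (by norm_num)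
  set t := Real.logb q n with ht
  have hβt : β ≤ t := Real.logb_le_logb_of_le hq1 (by norm_num) (by exact_mod_cast hn)
  have ht0 : 0 < t := lt_of_lt_of_le hβ hβt
  have hclog : (Nat.clog q n : ℝ) ≤ t + 1 := clog_le_logb q n hq hn
  set K : ℝ := 216 * ((c1:ℝ) + c2 + 1) with hK
  have hK0 : (0:ℝ) < K := by positivity
  have s0 : (δcard : ℝ) ≤ 216 * ((c1:ℝ) + c2 * (Nat.clog q n : ℝ) + 1) := by
    have : (δcard : ℝ) ≤ ((216 * (c1 + c2 * Nat.clog q n + 1) : ℕ) : ℝ) := by exact_mod_cast hδ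
    push_cast at this
    linarith
  have s1 : 216 * ((c1:ℝ) + c2 * (Nat.clog q n : ℝ) + 1) ≤ K * (t + 1) := by
    have hc2 : (0:ℝ) ≤ c2 := by positivity
    have h1 : (c2:ℝ) * (Nat.clog q n : ℝ) ≤ c2 * (t + 1) := by
      apply mul_le_mul_of_nonneg_left hclog hc2
    have ht1 : (1:ℝ) ≤ t + 1 := by linarith
    have hc1 : (0:ℝ) ≤ c1 := by positivity
    rw [hK]
    nlinarith [mul_le_mul_of_nonneg_left ht1 hc1]
  have s2 : K * (t + 1) ≤ K * ((1 + 1/β) * t) := by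
    apply mul_le_mul_of_nonneg_left _ (le_of_lt hK0)
    have : 1 ≤ t / β := (one_le_div hβ).mpr hβt
    have h' : (1/β) * t = t / β := by ring
    nlinarith
  have s3 : K * ((1 + 1/β) * t) ≤ K * (1 + 1/β) * ((1/β) * t^2) := by
    have h1β : 0 < 1 + 1/β := by positivity
    have : t ≤ (1/β) * t^2 := by
      rw [pow_two]
      rw [div_mul_eq_mul_div, one_mul]
      rw [le_div_iff₀ hβ]
      nlinarith
    nlinarith [mul_le_mul_of_nonneg_left this (le_of_lt (mul_pos hK0 h1β))]
  have s4 : K * (1 + 1/β) * ((1/β) * t^2) ≤ (K * (1 + 1/β) * (1/β) + 1) * t^2 := by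
    nlinarith [sq_nonneg t]
  calc (δcard : ℝ) ≤ 216 * ((c1:ℝ) + c2 * (Nat.clog q n : ℝ) + 1) := s0
    _ ≤ K * (t + 1) := s1
    _ ≤ K * ((1 + 1/β) * t) := s2
    _ ≤ K * (1 + 1/β) * ((1/β) * t^2) := s3
    _ ≤ (K * (1 + 1/β) * (1/β) + 1) * t^2 := s4


end S9

/-- Theorem 4: there is a constant `c_3` (depending only on `q, c_1, c_2`)
such that for every `n` and every `r = (r_1,r_2)` there is a window function `W` assigning
to each received sequence a subset of `[1, n-1]` of size at most `c_3 (log_q n)^2` which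
contains the position of the absorption, whenever a codeword `x ∈ D_1(n;r)` suffers a
single absorption at position `i` (positions are 1-indexed). -/
theorem stmt9 (q c1 c2 : ℕ) (hq : 3 ≤ q)
    (hc1 : 0 < c1) (hc2 : 0 < c2) (h4c1 : 4 ∣ c1) (h4c2 : 4 ∣ c2)
    (hineq1 : ((q : ℝ) ^ 4 / ((q : ℝ) ^ 4 - 1)) ^ (c1 / 4 - 1) ≥ (q : ℝ) / ((q : ℝ) - 1))
    (hineq2 : ((q : ℝ) ^ 4 / ((q : ℝ) ^ 4 - 1)) ^ (c2 / 4) ≥ (q : ℝ)) :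
    ∃ c3 : ℝ, 0 < c3 ∧ ∀ n r1 r2 : ℕ, ∃ W : List ℕ → Finset ℕ,
      (∀ y, W y ⊆ Finset.Icc 1 (n - 1)) ∧
      (∀ y, ((W y).card : ℝ) ≤ c3 * (Real.logb q n) ^ 2) ∧
      (∀ x, memD1 q n (c1 + c2 * Nat.clog q n) r1 r2 x →
        ∀ i, 1 ≤ i → i ≤ n - 1 →
          i ∈ W (x.take (i - 1) ++ vplus q (x.getD (i - 1) 0) (x.getD i 0) :: x.drop (i + 1))) := by
  classical
  have hc14 : 4 ≤ c1 := Nat.le_of_dvd hc1 h4c1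
  have hq1 : (1:ℝ) < q := by exact_mod_cast (by omega : 1 < q)
  have hβ : 0 < Real.logb q 2 := Real.logb_pos hq1 (by norm_num)
  have hK0 : (0:ℝ) < 216 * ((c1:ℝ) + c2 + 1) := by positivity
  have h1β : (0:ℝ) < 1 + 1/Real.logb q 2 := by
    have := one_div_pos.mpr hβ
    linarith
  have hc3 : (0:ℝ) < 216 * ((c1:ℝ) + c2 + 1) * (1 + 1/Real.logb q 2) * (1/Real.logb q 2) + 1 := by
    have hX : (0:ℝ) < 216 * ((c1:ℝ) + c2 + 1) * (1 + 1/Real.logb q 2) * (1/Real.logb q 2) :=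
      mul_pos (mul_pos hK0 h1β) (one_div_pos.mpr hβ)
    linarith
  refine ⟨216 * ((c1:ℝ) + c2 + 1) * (1 + 1/Real.logb q 2) * (1/Real.logb q 2) + 1, hc3, ?_⟩
  intro n r1 r2
  set δ := c1 + c2 * Nat.clog q n with hδdef
  refine ⟨fun y => (Finset.Icc 1 (n-1)).filter (fun i => ∃ x, memD1 q n δ r1 r2 x ∧
      y = x.take (i - 1) ++ vplus q (x.getD (i - 1) 0) (x.getD i 0) :: x.drop (i + 1)),
    ?_, ?_, ?_⟩
  · intro y
    exact Finset.filter_subset _ _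
  · intro y
    rcases le_or_gt 2 n with hn2 | hn2
    · have hcard := S9.Count.card_bound n δ r1 (by omega) y
        (fun i => ∃ x, memD1 q n δ r1 r2 x ∧
          y = x.take (i - 1) ++ vplus q (x.getD (i - 1) 0) (x.getD i 0) :: x.drop (i + 1))
        (fun i hi1 hi2 hf => by
          obtain ⟨x, hx, hy⟩ := hf
          rw [hy]
          exact S9.extract q n δ r1 r2 x hx i hi1 hi2)
      have := S9.analytic q c1 c2 n
        (((Finset.Icc 1 (n-1)).filter (fun i => ∃ x, memD1 q n δ r1 r2 x ∧
          y = x.take (i - 1) ++ vplus q (x.getD (i - 1) 0) (x.getD i 0) :: x.drop (i + 1))).card)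
        hq hn2 (by omega)
      exact this
    · have hempty : Finset.Icc 1 (n-1) = ∅ := Finset.Icc_eq_empty (by omega)
      simp only [hempty, Finset.filter_empty, Finset.card_empty, Nat.cast_zero]
      exact mul_nonneg hc3.le (sq_nonneg _)
  · intro x hx i h1 h2
    rw [Finset.mem_filter, Finset.mem_Icc]
    exact ⟨⟨h1, h2⟩, x, hx, rfl⟩
end

section
/- Let q ≥ 3, let δ = c_1 + c_2⌈log_q(n)⌉ with c_1, c_2 positive multiples of 4 satisfying (q^4/(q^4−1))^{c_1/4 − 1} ≥ q/(q−1) and (q^4/(q^4−1))^{c_2/4} ≥ q, let L = c_3 (log_q n)^2 be an integer with (2L+1) | n. Then there exist r ∈ Z_{2n} × Z_3 and α, β ∈ M = Z_4^{q−1} × Z_{2L+1} × Z_2 × Z_{q(2L+1)} × Z_{4L−1} such that |D(n;r,α,β)| ≥ |R_{q,n}| / (2n · 3 · [4^{q−1} · (2L+1) · 2 · q(2L+1) · (4L−1)]^2); in particular, combined with |R_{q,n}| ≥ q^{n−5}, the redundancy of D(n;r,α,β) is at most log_q(n) + 12 log_q log_q(n) + O(1). -/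
/-- The set `R_{q,n}`. -/
def Rset (q n δ : ℕ) : Set (List ℕ) :=
  {x | x.length = n ∧ (∀ a ∈ x, a < q) ∧ [0, 0, 1, 1] <:+ x ∧
    ∃ zs : List (List ℕ), x = zs.flatten ∧ ∀ z ∈ zs, seg0011 δ z}

/-- The `i`-th block `x^{(1,i+1)}` of `x` (0-indexed `i`). -/
def blk1 (L : ℕ) (x : List ℕ) (i : ℕ) : List ℕ :=
  (x.drop (i * (2 * L + 1))).take (2 * L + 1)

/-- The `i`-th shifted block `x^{(2,i+1)}` of `x`. -/
def blk2 (L : ℕ) (x : List ℕ) (i : ℕ) : List ℕ :=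
  (x.drop (i * (2 * L + 1) + L)).take (2 * L + 1)

/-- The condition `Σ_{i<m} f̂(blk i) = s` in
`M = Z_4^{q-1} × Z_{2L+1} × Z_2 × Z_{q(2L+1)} × Z_{4L-1}`, componentwise. -/
def hatSumEq (q L m : ℕ) (blk : ℕ → List ℕ)
    (sN : ℕ → ℕ) (s1 s2 s3 s4 : ℕ) : Prop :=
  (∀ a, a ≤ q - 2 → (∑ i ∈ Finset.range m, (blk i).count a) ≡ sN a [MOD 4]) ∧
  (∑ i ∈ Finset.range m, syn (alphaSeq (blk i))) ≡ s1 [MOD 2 * L + 1] ∧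
  (∑ i ∈ Finset.range m, invCount (blk i)) ≡ s2 [MOD 2] ∧
  (∑ i ∈ Finset.range m, syn (blk i)) ≡ s3 [MOD q * (2 * L + 1)] ∧
  (∑ i ∈ Finset.range m, syn (pseq q (blk i))) ≡ s4 [MOD 4 * L - 1]

/-- Membership in the code `D(n;r,α,β)`. -/
def memD (q n δ L r1 r2 : ℕ) (sN : ℕ → ℕ) (s1 s2 s3 s4 : ℕ)
    (uN : ℕ → ℕ) (u1 u2 u3 u4 : ℕ) (x : List ℕ) : Prop :=
  memD1 q n δ r1 r2 x ∧
  hatSumEq q L (n / (2 * L + 1)) (blk1 L x) sN s1 s2 s3 s4 ∧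
  hatSumEq q L (n / (2 * L + 1) - 1) (blk2 L x) uN u1 u2 u3 u4

/-!
Pigeonhole: the map sending `x ∈ R_{q,n}` to `(f(x), g(x), ĝ₁(x), ĝ₂(x))` takes values in
`Z_{2n} × Z_3 × M × M`, so one of its fibres has at least a `1/(2n · 3 · |M|²)` share of
`R_{q,n}`, and each fibre lies in the corresponding code `D(n; r, α, β)`.
-/

open Finset

theorem Finset.exists_card_le_card_fiber_mul {α β : Type*} [DecidableEq β] [Fintype β]
    [Nonempty β] (s : Finset α) (f : α → β) :
    ∃ b, #s ≤ #{x ∈ s | f x = b} * Fintype.card β := by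
  obtain ⟨b, -, hb⟩ := exists_max_image univ (fun b => #{x ∈ s | f x = b}) univ_nonempty
  exact ⟨b, card_le_mul_card_image_of_maps_to (fun _ _ => mem_univ _) _
    fun c _ => hb c (mem_univ c)⟩

theorem Set.Finite.exists_ncard_le_ncard_fiber_mul {α β : Type*} [Finite β] [Nonempty β]
    {S : Set α} (hS : S.Finite) (f : α → β) :
    ∃ b, S.ncard ≤ {x ∈ S | f x = b}.ncard * Nat.card β := by
  classical
  have := Fintype.ofFinite β
  obtain ⟨s, rfl⟩ := hS.exists_finset_coe
  obtain ⟨b, hb⟩ := s.exists_card_le_card_fiber_mul f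
  refine ⟨b, ?_⟩
  have hfibre : {x ∈ (s : Set α) | f x = b} = ↑({x ∈ s | f x = b} : Finset α) := by simp
  rwa [hfibre, Set.ncard_coe_finset, Set.ncard_coe_finset, Nat.card_eq_fintype_card]

theorem finite_setOf_length_eq_forall_lt (q n : ℕ) :
    {l : List ℕ | l.length = n ∧ ∀ a ∈ l, a < q}.Finite := by
  refine ((List.finite_length_eq (Fin q) n).image (List.map Fin.val)).subset ?_
  rintro l ⟨rfl, hl⟩
  exact ⟨l.attach.map fun a => ⟨a.1, hl a.1 a.2⟩, by simp, by simp [List.map_map]⟩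

theorem Rset_finite (q n δ : ℕ) : (Rset q n δ).Finite :=
  (finite_setOf_length_eq_forall_lt q n).subset fun _ hx => ⟨hx.1, hx.2.1⟩

theorem Rset_zero (q δ : ℕ) : Rset q 0 δ = ∅ :=
  Set.eq_empty_of_forall_notMem fun _ hx => by
    simpa [hx.1] using hx.2.2.1.length_le

theorem Nat.modEq_val_of_natCast_eq {k a : ℕ} {t : ZMod k} (h : (a : ZMod k) = t) :
    a ≡ t.val [MOD k] := by
  subst h
  rw [ZMod.val_natCast]
  exact (Nat.mod_modEq a k).symm

/-- The group `M` in which `f̂` takes its values. -/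
abbrev HashSpace (q L : ℕ) : Type :=
  (Fin (q - 1) → ZMod 4) × ZMod (2 * L + 1) × ZMod 2 × ZMod (q * (2 * L + 1)) ×
    ZMod (4 * L - 1)

/-- `Σ_{i<m} f̂(blk i) ∈ M`. -/
def blockHash (q L m : ℕ) (blk : ℕ → List ℕ) : HashSpace q L :=
  (fun a => ((∑ i ∈ range m, (blk i).count (a : ℕ) : ℕ) : ZMod 4),
   ((∑ i ∈ range m, syn (alphaSeq (blk i)) : ℕ) : ZMod (2 * L + 1)),
   ((∑ i ∈ range m, invCount (blk i) : ℕ) : ZMod 2),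
   ((∑ i ∈ range m, syn (blk i) : ℕ) : ZMod (q * (2 * L + 1))),
   ((∑ i ∈ range m, syn (pseq q (blk i)) : ℕ) : ZMod (4 * L - 1)))

def countResidues {q L : ℕ} (s : HashSpace q L) (a : ℕ) : ℕ :=
  if h : a < q - 1 then (s.1 ⟨a, h⟩).val else 0

theorem hatSumEq_of_blockHash_eq {q L m : ℕ} {blk : ℕ → List ℕ} {s : HashSpace q L}
    (hq : 2 ≤ q) (h : blockHash q L m blk = s) :
    hatSumEq q L m blk (countResidues s) s.2.1.val s.2.2.1.val s.2.2.2.1.val s.2.2.2.2.val := by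
  subst h
  refine ⟨fun a ha => ?_, ?_, ?_, ?_, ?_⟩
  · rw [countResidues, dif_pos (by omega)]
    exact Nat.modEq_val_of_natCast_eq rfl
  all_goals exact Nat.modEq_val_of_natCast_eq rfl

noncomputable def segmentation (δ : ℕ) (x : List ℕ) : List (List ℕ) :=
  Classical.epsilon fun zs => x = zs.flatten ∧ ∀ z ∈ zs, seg0011 δ z

theorem segmentation_spec {δ : ℕ} {x : List ℕ}
    (h : ∃ zs : List (List ℕ), x = zs.flatten ∧ ∀ z ∈ zs, seg0011 δ z) :
    x = (segmentation δ x).flatten ∧ ∀ z ∈ segmentation δ x, seg0011 δ z :=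
  Classical.epsilon_spec h

abbrev CodeIndex (q n L : ℕ) : Type := ZMod (2 * n) × ZMod 3 × HashSpace q L × HashSpace q L

/-- `x ↦ (f(x), g(x), ĝ₁(x), ĝ₂(x))`. -/
noncomputable def codeHash (q n δ L : ℕ) (x : List ℕ) : CodeIndex q n L :=
  ((fseg (segmentation δ x) : ZMod (2 * n)), ((segmentation δ x).length : ZMod 3),
   blockHash q L (n / (2 * L + 1)) (blk1 L x), blockHash q L (n / (2 * L + 1) - 1) (blk2 L x))

/-- The code `D(n; r, α, β)` indexed by `t = (r, α, β)`. -/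
def codeOf (q n δ L : ℕ) (t : CodeIndex q n L) : Set (List ℕ) :=
  {x | memD q n δ L t.1.val t.2.1.val (countResidues t.2.2.1) t.2.2.1.2.1.val t.2.2.1.2.2.1.val
    t.2.2.1.2.2.2.1.val t.2.2.1.2.2.2.2.val (countResidues t.2.2.2) t.2.2.2.2.1.val
    t.2.2.2.2.2.1.val t.2.2.2.2.2.2.1.val t.2.2.2.2.2.2.2.val x}

theorem codeOf_subset_Rset (q n δ L : ℕ) (t : CodeIndex q n L) :
    codeOf q n δ L t ⊆ Rset q n δ :=
  fun _ ⟨⟨hlen, hlt, hsuf, zs, hflat, hsegs, _⟩, _⟩ =>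
    ⟨hlen, hlt, hsuf, zs, hflat, hsegs⟩

theorem mem_codeOf_of_codeHash_eq {q n δ L : ℕ} {x : List ℕ} {t : CodeIndex q n L}
    (hq : 2 ≤ q) (hx : x ∈ Rset q n δ) (ht : codeHash q n δ L x = t) :
    x ∈ codeOf q n δ L t := by
  obtain ⟨hlen, hlt, hsuf, hseg⟩ := hx
  obtain ⟨hflat, hsegs⟩ := segmentation_spec hseg
  subst ht
  exact ⟨⟨hlen, hlt, hsuf, _, hflat, hsegs, Nat.modEq_val_of_natCast_eq rfl,
    Nat.modEq_val_of_natCast_eq rfl⟩,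
    hatSumEq_of_blockHash_eq hq rfl, hatSumEq_of_blockHash_eq hq rfl⟩

theorem card_hashSpace (q L : ℕ) :
    Nat.card (HashSpace q L) =
      4 ^ (q - 1) * (2 * L + 1) * 2 * (q * (2 * L + 1)) * (4 * L - 1) := by
  rw [HashSpace]
  simp only [Nat.card_prod, Nat.card_fun, Nat.card_zmod, Nat.card_fin]
  ring

theorem exists_Rset_ncard_le_codeOf_ncard_mul {q n L : ℕ} (δ : ℕ) (hq : 2 ≤ q) (hn : 0 < n)
    (hL : 0 < L) :
    ∃ t, (Rset q n δ).ncard ≤ (codeOf q n δ L t).ncard *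
      (2 * n * 3 * (4 ^ (q - 1) * (2 * L + 1) * 2 * (q * (2 * L + 1)) * (4 * L - 1)) ^ 2) := by
  have : NeZero (2 * n) := ⟨by omega⟩
  have : NeZero (q * (2 * L + 1)) := ⟨by positivity⟩
  have : NeZero (4 * L - 1) := ⟨by omega⟩
  obtain ⟨t, ht⟩ := (Rset_finite q n δ).exists_ncard_le_ncard_fiber_mul (codeHash q n δ L)
  have hfibre : {x ∈ Rset q n δ | codeHash q n δ L x = t}.ncard ≤ (codeOf q n δ L t).ncard :=
    Set.ncard_le_ncard (fun x hx => mem_codeOf_of_codeHash_eq hq hx.1 hx.2)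
      ((Rset_finite q n δ).subset (codeOf_subset_Rset q n δ L t))
  refine ⟨t, ht.trans (Nat.mul_le_mul hfibre (le_of_eq ?_))⟩
  rw [Nat.card_prod, Nat.card_prod, Nat.card_prod, Nat.card_zmod, Nat.card_zmod, card_hashSpace]
  ring

theorem stmt11_general (q n c1 c2 L : ℕ) (hq : 3 ≤ q)
    (hL : 0 < L) :
    ∃ (r1 r2 : ℕ) (sN : ℕ → ℕ) (s1 s2 s3 s4 : ℕ) (uN : ℕ → ℕ) (u1 u2 u3 u4 : ℕ),
      (Rset q n (c1 + c2 * Nat.clog q n)).ncard ≤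
        {x : List ℕ |
            memD q n (c1 + c2 * Nat.clog q n) L r1 r2 sN s1 s2 s3 s4 uN u1 u2 u3 u4 x}.ncard *
          (2 * n * 3 * (4 ^ (q - 1) * (2 * L + 1) * 2 * (q * (2 * L + 1)) * (4 * L - 1)) ^ 2) := by
  rcases Nat.eq_zero_or_pos n with rfl | hn
  · exact ⟨0, 0, fun _ => 0, 0, 0, 0, 0, fun _ => 0, 0, 0, 0, 0, by simp [Rset_zero]⟩
  obtain ⟨t, ht⟩ :=
    exists_Rset_ncard_le_codeOf_ncard_mul (c1 + c2 * Nat.clog q n) (by omega : 2 ≤ q) hn hL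
  exact ⟨_, _, _, _, _, _, _, _, _, _, _, _, ht⟩

/-- there is a choice of `r, α, β` such that
`|D(n;r,α,β)| ≥ |R_{q,n}| / (2n · 3 · [4^{q-1}(2L+1)·2·q(2L+1)(4L-1)]^2)`
(stated multiplicatively, avoiding division). -/
theorem stmt11 (q n c1 c2 L : ℕ) (hq : 3 ≤ q)
    (hc1 : 0 < c1) (hc2 : 0 < c2) (h4c1 : 4 ∣ c1) (h4c2 : 4 ∣ c2)
    (hineq1 : ((q : ℝ) ^ 4 / ((q : ℝ) ^ 4 - 1)) ^ (c1 / 4 - 1) ≥ (q : ℝ) / ((q : ℝ) - 1))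
    (hineq2 : ((q : ℝ) ^ 4 / ((q : ℝ) ^ 4 - 1)) ^ (c2 / 4) ≥ (q : ℝ))
    (hL : 0 < L) (hdvd : (2 * L + 1) ∣ n) :
    ∃ (r1 r2 : ℕ) (sN : ℕ → ℕ) (s1 s2 s3 s4 : ℕ) (uN : ℕ → ℕ) (u1 u2 u3 u4 : ℕ),
      (Rset q n (c1 + c2 * Nat.clog q n)).ncard ≤
        {x : List ℕ |
            memD q n (c1 + c2 * Nat.clog q n) L r1 r2 sN s1 s2 s3 s4 uN u1 u2 u3 u4 x}.ncard *
          (2 * n * 3 * (4 ^ (q - 1) * (2 * L + 1) * 2 * (q * (2 * L + 1)) * (4 * L - 1)) ^ 2) :=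
  stmt11_general q n c1 c2 L hq hL
end

section
/- Let q ≥ 2 and let B be any map assigning to each u ∈ Σ_q^n a set B(u) of sequences. For E ⊆ Σ_q^n and u ∈ E let N_E(u) = {u′ ∈ E : u′ ≠ u and B(u′) ∩ B(u) ≠ ∅}. Let f : Σ_q^n → ℕ be a function such that f(u) ≠ f(u′) whenever u, u′ ∈ Σ_q^n, u ≠ u′ and B(u) ∩ B(u′) ≠ ∅. Then for every E ⊆ Σ_q^n and every u ∈ E there exists a positive integer P ≤ 1 + Σ_{u′ ∈ N_E(u)} τ(|f(u) − f(u′)|) such that f(u) ≢ f(u′) (mod P) for all u′ ∈ N_E(u), where τ(m) denotes the number of positive divisors of m. -/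
open scoped Classical

/-!
The divisors of the finitely many nonzero differences `|f u - f u'|`, `u' ∈ N_E(u)`, number at
most `∑ τ(|f u - f u'|)`, so some `P` among the first `1 + ∑ τ(|f u - f u'|)` positive integers
divides none of them. The differences are nonzero because `f` separates `u` from its neighbours.
-/

theorem Nat.exists_pos_le_one_add_sum_card_divisors_not_dvd {ι : Type*} (s : Finset ι)
    (d : ι → ℕ) (hd : ∀ i ∈ s, d i ≠ 0) :
    ∃ P : ℕ, 0 < P ∧ P ≤ 1 + ∑ i ∈ s, (d i).divisors.card ∧ ∀ i ∈ s, ¬ P ∣ d i := by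
  by_contra! h
  have hsub : Finset.Icc 1 (1 + ∑ i ∈ s, (d i).divisors.card) ⊆
      s.biUnion (fun i => (d i).divisors) := by
    intro P hP
    rw [Finset.mem_Icc] at hP
    obtain ⟨i, hi, hPi⟩ := h P hP.1 hP.2
    exact Finset.mem_biUnion.2 ⟨i, hi, Nat.mem_divisors.2 ⟨hPi, hd i hi⟩⟩
  have hcard := (Finset.card_le_card hsub).trans Finset.card_biUnion_le
  rw [Nat.card_Icc] at hcard
  omega

theorem Nat.modEq_iff_dvd_natAbs_sub {P a b : ℕ} :
    a ≡ b [MOD P] ↔ P ∣ ((a : ℤ) - b).natAbs := by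
  rw [Nat.ModEq.comm, Nat.modEq_iff_dvd, Int.natCast_dvd]

theorem stmt12_general (q n : ℕ)
    (B : List ℕ → Set (List ℕ)) (f : List ℕ → ℕ)
    (hf : ∀ u u' : List ℕ,
      u.length = n → (∀ a ∈ u, a < q) → u'.length = n → (∀ a ∈ u', a < q) →
      u ≠ u' → (B u ∩ B u').Nonempty → f u ≠ f u')
    (E : Finset (List ℕ)) (hE : ∀ u ∈ E, u.length = n ∧ ∀ a ∈ u, a < q)
    (u : List ℕ) (hu : u ∈ E) :
    ∃ P : ℕ, 0 < P ∧
      P ≤ 1 + ∑ u' ∈ E.filter (fun u' => u' ≠ u ∧ (B u' ∩ B u).Nonempty),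
              (((f u : ℤ) - (f u' : ℤ)).natAbs).divisors.card ∧
      ∀ u' ∈ E.filter (fun u' => u' ≠ u ∧ (B u' ∩ B u).Nonempty),
        ¬ (f u ≡ f u' [MOD P]) := by
  have hdiff : ∀ u' ∈ E.filter (fun u' => u' ≠ u ∧ (B u' ∩ B u).Nonempty),
      ((f u : ℤ) - (f u' : ℤ)).natAbs ≠ 0 := by
    intro u' hu'
    obtain ⟨hu'E, hne, hball⟩ := Finset.mem_filter.1 hu'
    have hfne := hf u u' (hE u hu).1 (hE u hu).2 (hE u' hu'E).1 (hE u' hu'E).2 hne.symm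
      (Set.inter_comm (B u') (B u) ▸ hball)
    rw [Ne, Int.natAbs_eq_zero, sub_eq_zero]
    exact_mod_cast hfne
  obtain ⟨P, hP, hPle, hPdvd⟩ :=
    Nat.exists_pos_le_one_add_sum_card_divisors_not_dvd _ _ hdiff
  exact ⟨P, hP, hPle, fun u' hu' h => hPdvd u' hu' (Nat.modEq_iff_dvd_natAbs_sub.1 h)⟩

/-- Lemma 7, key step of syndrome compression: let `B` assign an arbitrary
error ball to each sequence, and let `f` separate any two distinct sequences of `Σ_q^n`
whose balls intersect. Then for every code `E ⊆ Σ_q^n` and every `u ∈ E` there is a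
positive integer `P ≤ 1 + Σ_{u' ∈ N_E(u)} τ(|f(u) - f(u')|)` with
`f(u) ≢ f(u') (mod P)` for all `u' ∈ N_E(u)`. -/
theorem stmt12 (q n : ℕ) (hq : 2 ≤ q)
    (B : List ℕ → Set (List ℕ)) (f : List ℕ → ℕ)
    (hf : ∀ u u' : List ℕ,
      u.length = n → (∀ a ∈ u, a < q) → u'.length = n → (∀ a ∈ u', a < q) →
      u ≠ u' → (B u ∩ B u').Nonempty → f u ≠ f u')
    (E : Finset (List ℕ)) (hE : ∀ u ∈ E, u.length = n ∧ ∀ a ∈ u, a < q)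
    (u : List ℕ) (hu : u ∈ E) :
    ∃ P : ℕ, 0 < P ∧
      P ≤ 1 + ∑ u' ∈ E.filter (fun u' => u' ≠ u ∧ (B u' ∩ B u).Nonempty),
              (((f u : ℤ) - (f u' : ℤ)).natAbs).divisors.card ∧
      ∀ u' ∈ E.filter (fun u' => u' ≠ u ∧ (B u' ∩ B u).Nonempty),
        ¬ (f u ≡ f u' [MOD P]) :=
  stmt12_general q n B f hf E hE u hu
end

section
/- Let q ≥ 3 and t ≥ 2 be integers, and let E ⊆ Σ_q^n be any single-absorption correcting code (i.e., B_1^{ab}(x) ∩ B_1^{ab}(x′) = ∅ for all distinct x, x′ ∈ E). Then for every u ∈ E, the number of codewords u′ ∈ E with u′ ≠ u and B_t^{ab}(u) ∩ B_t^{ab}(u′) ≠ ∅ is strictly less than q^{2t−2} n^{2t−1}. -/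
namespace Stmt13Aux

open Finset

open Finset

/-- hockey stick: `∑_{i≤s} C(m+i, i) = C(m+s+1, s)`. -/
lemma hockey (m : ℕ) : ∀ s : ℕ, ∑ i ∈ Finset.range (s+1), (m + i).choose i = (m + s + 1).choose s
  | 0 => by simp
  | s+1 => by
    rw [Finset.sum_range_succ, hockey m s]
    have h1 : m + (s+1) + 1 = (m + s + 1) + 1 := by omega
    have h2 : m + (s+1) = m + s + 1 := by omega
    rw [h1, h2]
    have h3 := Nat.choose_succ_succ (m+s+1) s
    simp only [Nat.succ_eq_add_one] at h3 ⊢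
    omega

lemma sumRec : ∀ (s n : ℕ), s ≤ n →
    ∑ i ∈ Finset.range (s+1), (n - i).choose (s - i) = (n+1).choose s
  | 0, n, _ => by simp
  | s+1, n, h => by
    rw [Finset.sum_range_succ']
    have h1 : ∀ i ∈ Finset.range (s+1), (n - (i+1)).choose (s + 1 - (i+1))
        = ((n-1) - i).choose (s - i) := by
      intro i _
      congr 1 <;> omega
    rw [Finset.sum_congr rfl h1, sumRec s (n-1) (by omega)]
    simp only [Nat.sub_zero]
    have hn : n - 1 + 1 = n := by omega
    rw [hn]
    have h3 := Nat.choose_succ_succ n s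
    simp only [Nat.succ_eq_add_one] at h3
    omega

lemma chooseRec (n s : ℕ) :
    n.choose s + ∑ i ∈ Finset.range (min s n), (n - (i+1)).choose (s - (i+1)) ≤ (n+1).choose s := by
  rcases le_or_gt s n with h | h
  · rw [min_eq_left h]
    have := sumRec s n h
    rw [Finset.sum_range_succ'] at this
    simp only [Nat.sub_zero] at this
    omega
  · rw [min_eq_right h.le]
    have h0 : n.choose s = 0 := Nat.choose_eq_zero_of_lt h
    have h1 : ∀ i ∈ Finset.range n, (n - (i+1)).choose (s - (i+1)) = 0 := by
      intro i hi
      simp only [Finset.mem_range] at hi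
      exact Nat.choose_eq_zero_of_lt (by omega)
    rw [Finset.sum_congr rfl h1, h0]
    simp

/-- All `q`-ary lists of length `n`. -/
def listsF (q : ℕ) : ℕ → Finset (List ℕ)
  | 0 => {[]}
  | n+1 => ((Finset.range q) ×ˢ listsF q n).image (fun p => p.1 :: p.2)

lemma mem_listsF {q : ℕ} : ∀ {n : ℕ} {l : List ℕ}, l.length = n → (∀ a ∈ l, a < q) →
    l ∈ listsF q n := by
  intro n
  induction n with
  | zero => intro l h1 _; simp [listsF, List.length_eq_zero_iff.1 h1]
  | succ n ih =>
    intro l h1 h2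
    match l with
    | a :: l =>
      simp only [listsF, Finset.mem_image, Finset.mem_product]
      refine ⟨(a, l), ⟨?_, ?_⟩, rfl⟩
      · exact Finset.mem_range.2 (h2 a (by simp))
      · exact ih (by simpa using h1) (fun b hb => h2 b (by simp [hb]))

lemma card_listsF (q : ℕ) : ∀ n : ℕ, (listsF q n).card ≤ q ^ n
  | 0 => by simp [listsF]
  | n+1 => by
    calc (listsF q (n+1)).card ≤ ((Finset.range q) ×ˢ listsF q n).card := Finset.card_image_le
    _ = q * (listsF q n).card := by rw [Finset.card_product, Finset.card_range]
    _ ≤ q * q ^ n := Nat.mul_le_mul_left _ (card_listsF q n)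
    _ = q ^ (n+1) := by rw [pow_succ, mul_comm]


/-- A finite cover of all results of `MergeBlocks op x · s`. -/
def mergeF (op : ℕ → ℕ → ℕ) : List ℕ → ℕ → Finset (List ℕ)
  | [], s => if s = 0 then {[]} else ∅
  | a :: x, s =>
      ((mergeF op x s).image (a :: ·)) ∪
      (Finset.range (min s x.length)).biUnion (fun i =>
        (mergeF op (x.drop (i+1)) (s - (i+1))).image
          (fun y => (List.foldl op 0 ((a :: x).take (i+2))) :: y))
  termination_by x _ => x.length
  decreasing_by
    all_goals (simp only [List.length_drop, List.length_cons]; omega)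

lemma mem_mergeF {op : ℕ → ℕ → ℕ} {x y : List ℕ} {s : ℕ}
    (h : MergeBlocks op x y s) : y ∈ mergeF op x s := by
  induction h with
  | nil => simp [mergeF]
  | keep a h ih =>
    rw [mergeF]
    exact Finset.mem_union_left _ (Finset.mem_image_of_mem _ ih)
  | @block b x y s hb h ih =>
    match b, hb with
    | a :: b, hb =>
      rw [List.cons_append, mergeF]
      apply Finset.mem_union_right
      apply Finset.mem_biUnion.2
      simp only [List.length_cons] at hb
      refine ⟨b.length - 1, ?_, ?_⟩
      · simp only [Finset.mem_range, lt_min_iff, List.length_append, List.length_cons]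
        omega
      · apply Finset.mem_image.2
        refine ⟨y, ?_, ?_⟩
        · have h1 : b.length - 1 + 1 = b.length := by omega
          rw [h1, List.drop_left]
          have h2 : s + ((a :: b).length - 1) - b.length = s := by
            simp only [List.length_cons]; omega
          rw [h2]; exact ih
        · congr 2
          have h1 : b.length - 1 + 2 = (a :: b).length := by
            simp only [List.length_cons]; omega
          rw [h1, ← List.cons_append, List.take_left]

lemma length_mem_mergeF {op : ℕ → ℕ → ℕ} : ∀ {x y : List ℕ} {s : ℕ},
    y ∈ mergeF op x s → y.length + s = x.length
  | [], y, s => by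
    rw [mergeF]
    split
    · rename_i h; intro hy; simp at hy; subst hy; simp [h]
    · simp
  | a :: x, y, s => by
    rw [mergeF]
    intro h
    rcases Finset.mem_union.1 h with h | h
    · rcases Finset.mem_image.1 h with ⟨y', hy', rfl⟩
      have := length_mem_mergeF hy'
      simp; omega
    · rcases Finset.mem_biUnion.1 h with ⟨i, hi, h⟩
      rcases Finset.mem_image.1 h with ⟨y', hy', rfl⟩
      have := length_mem_mergeF hy'
      simp only [Finset.mem_range, lt_min_iff] at hi
      simp [List.length_drop] at this ⊢
      omega
  termination_by x _ _ => x.length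
  decreasing_by
    all_goals (simp only [List.length_drop, List.length_cons]; omega)

lemma card_mergeF (op : ℕ → ℕ → ℕ) : ∀ (x : List ℕ) (s : ℕ),
    (mergeF op x s).card ≤ x.length.choose s
  | [], s => by
    rw [mergeF]
    split
    · rename_i h; simp [h]
    · simp
  | a :: x, s => by
    rw [mergeF]
    calc _ ≤ ((mergeF op x s).image (a :: ·)).card +
        ((Finset.range (min s x.length)).biUnion (fun i =>
          (mergeF op (x.drop (i+1)) (s - (i+1))).image
            (fun y => (List.foldl op 0 ((a :: x).take (i+2))) :: y))).card :=
        Finset.card_union_le _ _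
    _ ≤ x.length.choose s + ∑ i ∈ Finset.range (min s x.length),
          (x.length - (i+1)).choose (s - (i+1)) := by
        gcongr
        · exact le_trans Finset.card_image_le (card_mergeF op x s)
        · calc _ ≤ ∑ i ∈ Finset.range (min s x.length),
              ((mergeF op (x.drop (i+1)) (s - (i+1))).image
                (fun y => (List.foldl op 0 ((a :: x).take (i+2))) :: y)).card :=
              Finset.card_biUnion_le
          _ ≤ _ := by
              apply Finset.sum_le_sum
              intro i _
              refine le_trans Finset.card_image_le ?_
              have := card_mergeF op (x.drop (i+1)) (s - (i+1))
              simpa [List.length_drop] using this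
    _ ≤ (x.length + 1).choose s := chooseRec x.length s
    _ = (a :: x).length.choose s := by simp
  termination_by x _ => x.length
  decreasing_by
    all_goals (simp only [List.length_drop, List.length_cons]; omega)

/-- A finite cover of all `q`-ary sources `x` with `MergeBlocks (vplus q) x y s`. -/
def expandF (q : ℕ) : List ℕ → ℕ → Finset (List ℕ)
  | [], s => if s = 0 then {[]} else ∅
  | c :: y, s =>
      ((expandF q y s).image (c :: ·)) ∪
      (Finset.range s).biUnion (fun i =>
        ((listsF q (i+2)) ×ˢ (expandF q y (s - (i+1)))).image (fun p => p.1 ++ p.2))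

lemma mem_expandF {q : ℕ} {x y : List ℕ} {s : ℕ}
    (h : MergeBlocks (vplus q) x y s) (hx : ∀ a ∈ x, a < q) : x ∈ expandF q y s := by
  induction h with
  | nil => simp [expandF]
  | keep a h ih =>
    rw [expandF]
    apply Finset.mem_union_left
    exact Finset.mem_image_of_mem _ (ih (fun b hb => hx b (by simp [hb])))
  | @block b x y s hb h ih =>
    rw [expandF]
    apply Finset.mem_union_right
    apply Finset.mem_biUnion.2
    refine ⟨b.length - 2, ?_, ?_⟩
    · simp only [Finset.mem_range]; omega
    · apply Finset.mem_image.2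
      refine ⟨(b, x), ?_, rfl⟩
      rw [Finset.mem_product]
      constructor
      · exact mem_listsF (show b.length = _ by omega) (fun a ha => hx a (by simp [ha]))
      · have h2 : s + (b.length - 1) - (b.length - 2 + 1) = s := by omega
        rw [h2]
        exact ih (fun a ha => hx a (by simp [ha]))

lemma card_expandF {q : ℕ} (hq : 1 ≤ q) : ∀ (y : List ℕ) (s : ℕ),
    (expandF q y s).card ≤ q ^ (2*s) * (y.length + s).choose s
  | [], s => by
    rw [expandF]
    split
    · rename_i h; subst h; simp
    · simp
  | c :: y, s => by
    rw [expandF]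
    calc _ ≤ ((expandF q y s).image (c :: ·)).card +
        ((Finset.range s).biUnion (fun i =>
          ((listsF q (i+2)) ×ˢ (expandF q y (s - (i+1)))).image (fun p => p.1 ++ p.2))).card :=
        Finset.card_union_le _ _
    _ ≤ q ^ (2*s) * (y.length + s).choose s + ∑ i ∈ Finset.range s,
          q ^ (2*s) * (y.length + (s - (i+1))).choose (s - (i+1)) := by
        gcongr
        · exact le_trans Finset.card_image_le (card_expandF hq y s)
        · refine le_trans Finset.card_biUnion_le (Finset.sum_le_sum ?_)
          intro i hi
          simp only [Finset.mem_range] at hi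
          refine le_trans Finset.card_image_le ?_
          rw [Finset.card_product]
          calc (listsF q (i+2)).card * (expandF q y (s - (i+1))).card
              ≤ q ^ (i+2) * (q ^ (2*(s - (i+1))) * (y.length + (s - (i+1))).choose (s - (i+1))) :=
              Nat.mul_le_mul (card_listsF q (i+2)) (card_expandF hq y (s - (i+1)))
          _ = q ^ (i+2+2*(s-(i+1))) * (y.length + (s - (i+1))).choose (s - (i+1)) := by
              rw [← mul_assoc, ← pow_add]
          _ ≤ q ^ (2*s) * (y.length + (s - (i+1))).choose (s - (i+1)) := by
              gcongr
              · omega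
    _ = q ^ (2*s) * ((y.length + s).choose s + ∑ i ∈ Finset.range s,
          (y.length + (s - (i+1))).choose (s - (i+1))) := by
        rw [Nat.mul_add, Finset.mul_sum]
    _ ≤ q ^ (2*s) * ((c :: y).length + s).choose s := by
        apply Nat.mul_le_mul_left
        have hrefl : ∑ i ∈ Finset.range s,
            (y.length + (s - (i+1))).choose (s - (i+1))
            = ∑ i ∈ Finset.range s, (y.length + i).choose i := by
          rw [← Finset.sum_range_reflect]
          apply Finset.sum_congr rfl
          intro i hi
          simp only [Finset.mem_range] at hi
          congr 1 <;> omega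
        rw [hrefl]
        have h2 : (y.length + s).choose s + ∑ i ∈ Finset.range s, (y.length + i).choose i
            = ∑ i ∈ Finset.range (s+1), (y.length + i).choose i := by
          rw [Finset.sum_range_succ]; omega
        rw [h2, hockey]
        apply Nat.choose_le_choose
        simp only [List.length_cons]; omega
lemma vplus_lt {q a b : ℕ} (hq : 1 ≤ q) : vplus q a b < q := by
  unfold vplus; omega

lemma vplus_zero_left {q a : ℕ} (ha : a < q) : vplus q 0 a = a := by
  unfold vplus; omega

/-- One merge step can be peeled off a positive-budget `MergeBlocks`. -/
lemma mergeStep {q : ℕ} (hq : 1 ≤ q) : ∀ {x y : List ℕ} {s : ℕ},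
    MergeBlocks (vplus q) x y s → 1 ≤ s → (∀ a ∈ x, a < q) →
    ∃ p a b v, x = p ++ a :: b :: v ∧
      MergeBlocks (vplus q) (p ++ vplus q a b :: v) y (s - 1) := by
  intro x y s h
  induction h with
  | nil => omega
  | keep a h ih =>
    intro hs hx
    obtain ⟨p, a', b', v, heq, hm⟩ := ih hs (fun c hc => hx c (by simp [hc]))
    exact ⟨a :: p, a', b', v, by simp [heq], MergeBlocks.keep a hm⟩
  | @block b x y s hb h _ =>
    intro _ hx
    match b, hb with
    | e1 :: e2 :: b, _ =>
      have he1 : e1 < q := hx e1 (by simp)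
      have hfold : ∀ c : ℕ, List.foldl (vplus q) 0 (c :: b) = List.foldl (vplus q) (vplus q 0 c) b := by
        intro c; rfl
      rcases b with _ | ⟨e3, b⟩
      · -- block of length exactly 2
        refine ⟨[], e1, e2, x, by simp, ?_⟩
        have hfe : List.foldl (vplus q) 0 [e1, e2] = vplus q e1 e2 := by
          simp [List.foldl, vplus_zero_left he1]
        have hs1 : s + ([e1, e2].length - 1) - 1 = s := by simp
        rw [hs1]
        simp only [List.nil_append]
        rw [hfe] at *
        exact MergeBlocks.keep _ h
      · -- block of length ≥ 3
        refine ⟨[], e1, e2, (e3 :: b) ++ x, by simp, ?_⟩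
        have hkey := MergeBlocks.block (op := vplus q) (vplus q e1 e2 :: e3 :: b)
          (by simp) h
        have hfoldeq : List.foldl (vplus q) 0 (vplus q e1 e2 :: e3 :: b)
            = List.foldl (vplus q) 0 (e1 :: e2 :: e3 :: b) := by
          simp only [List.foldl]
          congr 1
          rw [vplus_zero_left (vplus_lt hq), vplus_zero_left he1]
        have hlen : s + ((vplus q e1 e2 :: e3 :: b).length - 1)
            = s + ((e1 :: e2 :: e3 :: b).length - 1) - 1 := by
          simp only [List.length_cons]; omega
        rw [hfoldeq, hlen] at hkey
        simpa using hkey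

/-- Decomposition: any element of `B_t(u')` lies in `B_{t-1}(z)` for some `z ∈ B_1(u')`. -/
lemma decomp {q t : ℕ} (hq : 1 ≤ q) (ht : 1 ≤ t) {u' y : List ℕ}
    (hentries : ∀ a ∈ u', a < q) (h : y ∈ absorbBall q t u') :
    ∃ z, z ∈ ball1 q u' ∧ z.length = u'.length - 1 ∧ (∀ a ∈ z, a < q) ∧
      ∃ t'' ≤ t - 1, MergeBlocks (vplus q) (z.take (z.length - t'')) y (t - 1 - t'') := by
  obtain ⟨t', ht', hm⟩ := h
  rcases Nat.eq_zero_or_pos t' with rfl | hpos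
  · -- t' = 0 : peel off one merge step
    rw [Nat.sub_zero, List.take_length] at hm
    obtain ⟨p, a, b, v, heq, hm'⟩ := mergeStep hq hm (by omega) hentries
    refine ⟨p ++ vplus q a b :: v, Or.inl ⟨p, v, a, b, heq, rfl⟩, ?_, ?_, 0, by omega, ?_⟩
    · rw [heq]; simp
    · intro c hc
      simp only [List.mem_append, List.mem_cons] at hc
      rcases hc with hc | hc | hc
      · exact hentries c (by rw [heq]; simp [hc])
      · subst hc; exact vplus_lt hq
      · exact hentries c (by rw [heq]; simp [hc])
    · rw [Nat.sub_zero, List.take_length]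
      exact hm'
  · -- t' ≥ 1 : drop the last symbol
    refine ⟨u'.dropLast, Or.inr rfl, by simp, ?_, t' - 1, by omega, ?_⟩
    · intro c hc; exact hentries c (List.dropLast_sublist u' |>.mem hc)
    · have hlen : u'.dropLast.length = u'.length - 1 := by simp
      have htake : u'.dropLast.take (u'.dropLast.length - (t' - 1))
          = u'.take (u'.length - t') := by
        rw [hlen, List.dropLast_eq_take, List.take_take]
        congr 1
        omega
      rw [htake]
      have hbudget : t - 1 - (t' - 1) = t - t' := by omega
      rw [hbudget]
      exact hm

end Stmt13Aux

open Stmt13Aux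

/-- Claim 1: if `E ⊆ Σ_q^n` is a single-absorption correcting code
(`q ≥ 3`, `t ≥ 2`), then for every `u ∈ E` the number of `u' ∈ E` with `u' ≠ u` and
`B_t^{ab}(u) ∩ B_t^{ab}(u') ≠ ∅` is strictly less than `q^{2t-2} n^{2t-1}`. -/
theorem stmt13 (q n t : ℕ) (hq : 3 ≤ q) (ht : 2 ≤ t) (hn : 1 ≤ n)
    (E : Set (List ℕ)) (hE : ∀ u ∈ E, u.length = n ∧ ∀ a ∈ u, a < q)
    (hcorr : ∀ x ∈ E, ∀ x' ∈ E, x ≠ x' → ball1 q x ∩ ball1 q x' = ∅)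
    (u : List ℕ) (hu : u ∈ E) :
    {u' | u' ∈ E ∧ u' ≠ u ∧ (absorbBall q t u ∩ absorbBall q t u').Nonempty}.ncard <
      q ^ (2 * t - 2) * n ^ (2 * t - 1) := by
  classical
  obtain ⟨hulen, huq⟩ := hE u hu
  set S : Set (List ℕ) :=
    {u' | u' ∈ E ∧ u' ≠ u ∧ (absorbBall q t u ∩ absorbBall q t u').Nonempty} with hS
  by_cases hsmall : n ≤ 2*t - 2
  · -- crude bound: S ⊆ all q-ary words of length n, minus u
    have hsub : S ⊆ ↑((listsF q n).erase u) := by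
      intro u' hu'
      obtain ⟨hmem, hne, -⟩ := hu'
      obtain ⟨hlen, hq'⟩ := hE u' hmem
      simp only [Finset.coe_erase, Set.mem_diff, Set.mem_singleton_iff]
      exact ⟨mem_listsF hlen hq', hne⟩
    have h1 : S.ncard ≤ ((listsF q n).erase u).card := by
      rw [← Set.ncard_coe_finset]
      exact Set.ncard_le_ncard hsub (Finset.finite_toSet _)
    have h2 : ((listsF q n).erase u).card < (listsF q n).card :=
      Finset.card_erase_lt_of_mem (mem_listsF hulen huq)
    have h3 : (listsF q n).card ≤ q ^ n := card_listsF q n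
    have h4 : q ^ n ≤ q ^ (2*t-2) := Nat.pow_le_pow_right (by omega) hsmall
    have h5 : q ^ (2*t-2) ≤ q ^ (2*t-2) * n ^ (2*t-1) :=
      Nat.le_mul_of_pos_right _ (Nat.pow_pos (by omega))
    omega
  · -- main case : n ≥ 2t-1
    push_neg at hsmall
    have hnt : t ≤ n := by omega
    have hq1 : 1 ≤ q := by omega
    -- the cover finset
    set Z : Finset (List ℕ) := (Finset.range (t+1)).biUnion (fun t' =>
      (mergeF (vplus q) (u.take (u.length - t')) (t - t')).biUnion (fun y =>
        (Finset.range t).biUnion (fun t'' =>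
          ((expandF q y (t-1-t'')) ×ˢ listsF q t'').image (fun p => p.1 ++ p.2)))) with hZ
    -- every codeword in S yields an element of its 1-ball inside Z
    have hzmem : ∀ u' ∈ S, ∃ z, z ∈ ball1 q u' ∧ z ∈ Z := by
      intro u' hu'
      obtain ⟨hmem, hne, y, hy1, hy2⟩ := hu'
      obtain ⟨hlen', hq''⟩ := hE u' hmem
      obtain ⟨z, hz1, hzlen, hzq, t'', ht'', hm2⟩ :=
        decomp hq1 (by omega) hq'' hy2
      refine ⟨z, hz1, ?_⟩
      obtain ⟨t', ht', hm⟩ := hy1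
      rw [hZ]
      apply Finset.mem_biUnion.2
      refine ⟨t', Finset.mem_range.2 (by omega), ?_⟩
      apply Finset.mem_biUnion.2
      refine ⟨y, mem_mergeF hm, ?_⟩
      apply Finset.mem_biUnion.2
      refine ⟨t'', Finset.mem_range.2 (by omega), ?_⟩
      apply Finset.mem_image.2
      refine ⟨(z.take (z.length - t''), z.drop (z.length - t'')), ?_, List.take_append_drop _ _⟩
      rw [Finset.mem_product]
      constructor
      · exact mem_expandF hm2 (fun a ha => hzq a (List.take_subset _ _ ha))
      · apply mem_listsF
        · simp only [List.length_drop]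
          rw [hzlen, hlen']
          omega
        · exact fun a ha => hzq a (List.drop_subset _ _ ha)
    -- injection into Z via choice
    set φ : List ℕ → List ℕ := fun u' =>
      if h : ∃ z, z ∈ ball1 q u' ∧ z ∈ Z then h.choose else [] with hφ
    have hφspec : ∀ u' ∈ S, φ u' ∈ ball1 q u' ∧ φ u' ∈ Z := by
      intro u' hu'
      have h := hzmem u' hu'
      rw [hφ]
      simp only [dif_pos h]
      exact h.choose_spec
    have hinj : Set.InjOn φ S := by
      intro u1 h1 u2 h2 heq
      by_contra hne
      have hd := hcorr u1 h1.1 u2 h2.1 hne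
      have hz1 := (hφspec u1 h1).1
      have hz2 := (hφspec u2 h2).1
      rw [heq] at hz1
      have : φ u2 ∈ ball1 q u1 ∩ ball1 q u2 := ⟨hz1, hz2⟩
      rw [hd] at this
      exact this
    have hcard : S.ncard ≤ Z.card := by
      rw [← Set.ncard_image_of_injOn hinj, ← Set.ncard_coe_finset]
      apply Set.ncard_le_ncard _ (Finset.finite_toSet _)
      rintro z ⟨u', hu', rfl⟩
      exact (hφspec u' hu').2
    -- count Z
    have hW : ∀ y : List ℕ, y.length = n - t →
        ((Finset.range t).biUnion (fun t'' =>
          ((expandF q y (t-1-t'')) ×ˢ listsF q t'').image (fun p => p.1 ++ p.2))).card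
        ≤ q^(2*(t-1)) * Nat.choose n (t-1) := by
      intro y hylen
      refine le_trans Finset.card_biUnion_le ?_
      calc ∑ t'' ∈ Finset.range t,
            (((expandF q y (t-1-t'')) ×ˢ listsF q t'').image (fun p => p.1 ++ p.2)).card
          ≤ ∑ t'' ∈ Finset.range t,
            q^(2*(t-1)) * ((n-t) + (t-1-t'')).choose (t-1-t'') := by
            apply Finset.sum_le_sum
            intro t'' ht''
            simp only [Finset.mem_range] at ht''
            refine le_trans Finset.card_image_le ?_
            rw [Finset.card_product]
            calc (expandF q y (t-1-t'')).card * (listsF q t'').card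
                ≤ (q^(2*(t-1-t'')) * (y.length + (t-1-t'')).choose (t-1-t'')) * q^t'' :=
                  Nat.mul_le_mul (card_expandF hq1 y _) (card_listsF q t'')
            _ = q^(2*(t-1-t'') + t'') * ((n-t) + (t-1-t'')).choose (t-1-t'') := by
                rw [hylen, mul_assoc, mul_comm ((_ : ℕ).choose _), ← mul_assoc, ← pow_add]
            _ ≤ q^(2*(t-1)) * ((n-t) + (t-1-t'')).choose (t-1-t'') := by
                gcongr
                · omega
      _ = q^(2*(t-1)) * ∑ t'' ∈ Finset.range t, ((n-t) + (t-1-t'')).choose (t-1-t'') := by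
            rw [Finset.mul_sum]
      _ ≤ q^(2*(t-1)) * Nat.choose n (t-1) := by
            apply Nat.mul_le_mul_left
            have hrefl : ∑ t'' ∈ Finset.range t, ((n-t) + (t-1-t'')).choose (t-1-t'')
                = ∑ i ∈ Finset.range t, ((n-t) + i).choose i := by
              rw [← Finset.sum_range_reflect]
              apply Finset.sum_congr rfl
              intro i hi
              simp only [Finset.mem_range] at hi
              congr 1 <;> omega
            rw [hrefl]
            have hh := hockey (n-t) (t-1)
            rw [(by omega : t - 1 + 1 = t)] at hh
            rw [hh]
            apply le_of_eq
            congr 1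
            omega
    have hZcard : Z.card ≤ (n+1).choose t * (q^(2*(t-1)) * Nat.choose n (t-1)) := by
      rw [hZ]
      refine le_trans Finset.card_biUnion_le ?_
      calc ∑ t' ∈ Finset.range (t+1),
            ((mergeF (vplus q) (u.take (u.length - t')) (t - t')).biUnion (fun y =>
              (Finset.range t).biUnion (fun t'' =>
                ((expandF q y (t-1-t'')) ×ˢ listsF q t'').image (fun p => p.1 ++ p.2)))).card
          ≤ ∑ t' ∈ Finset.range (t+1),
            (n - t').choose (t - t') * (q^(2*(t-1)) * Nat.choose n (t-1)) := by
            apply Finset.sum_le_sum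
            intro t' ht'
            simp only [Finset.mem_range] at ht'
            refine le_trans Finset.card_biUnion_le ?_
            calc ∑ y ∈ mergeF (vplus q) (u.take (u.length - t')) (t - t'),
                  ((Finset.range t).biUnion (fun t'' =>
                    ((expandF q y (t-1-t'')) ×ˢ listsF q t'').image (fun p => p.1 ++ p.2))).card
                ≤ ∑ _y ∈ mergeF (vplus q) (u.take (u.length - t')) (t - t'),
                  q^(2*(t-1)) * Nat.choose n (t-1) := by
                  apply Finset.sum_le_sum
                  intro y hy
                  apply hW
                  have hl := length_mem_mergeF hy
                  rw [List.length_take, hulen] at hl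
                  omega
            _ = (mergeF (vplus q) (u.take (u.length - t')) (t - t')).card
                  * (q^(2*(t-1)) * Nat.choose n (t-1)) := by
                  rw [Finset.sum_const, smul_eq_mul]
            _ ≤ (n - t').choose (t - t') * (q^(2*(t-1)) * Nat.choose n (t-1)) := by
                  refine Nat.mul_le_mul ?_ (le_refl _)
                  calc (mergeF (vplus q) (u.take (u.length - t')) (t - t')).card
                      ≤ (u.take (u.length - t')).length.choose (t - t') := card_mergeF _ _ _
                  _ = (n - t').choose (t - t') := by
                      rw [List.length_take, hulen, min_eq_left (by omega)]
      _ = (∑ t' ∈ Finset.range (t+1), (n - t').choose (t - t'))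
            * (q^(2*(t-1)) * Nat.choose n (t-1)) := by
            rw [Finset.sum_mul]
      _ = (n+1).choose t * (q^(2*(t-1)) * Nat.choose n (t-1)) := by
            rw [sumRec t n hnt]
    -- final arithmetic
    have hfinal : (n+1).choose t * (q^(2*(t-1)) * Nat.choose n (t-1))
        < q ^ (2*t-2) * n ^ (2*t-1) := by
      have he : 2*(t-1) = 2*t-2 := by omega
      rw [he]
      have hkey : (n+1).choose t * Nat.choose n (t-1) < n ^ (2*t-1) := by
        have hP1 : 1 ≤ n^(t-1) := Nat.one_le_pow _ _ (by omega)
        have hb : Nat.choose n (t-1) ≤ n^(t-1) := Nat.choose_le_pow n (t-1)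
        have ha : 2 * Nat.choose n t ≤ n^t := by
          have hd1 : Nat.descFactorial n t ≤ n^t := Nat.descFactorial_le_pow n t
          rw [Nat.descFactorial_eq_factorial_mul_choose] at hd1
          have hf : 2 ≤ Nat.factorial t := by
            calc 2 = Nat.factorial 2 := rfl
            _ ≤ Nat.factorial t := Nat.factorial_le ht
          calc 2 * Nat.choose n t ≤ Nat.factorial t * Nat.choose n t :=
            Nat.mul_le_mul_right _ hf
          _ ≤ n^t := hd1
        have hpascal : (n+1).choose t = Nat.choose n (t-1) + Nat.choose n t := by
          have h2 : t = (t-1) + 1 := by omega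
          rw [h2, Nat.choose_succ_succ]
          simp [Nat.succ_eq_add_one]
        have hnt2 : n^t = n^(t-1) * n := by
          rw [← pow_succ]
          congr 1
          omega
        have h21 : n^(2*t-1) = n^(t-1) * n^(t-1) * n := by
          rw [← pow_add, ← pow_succ]
          congr 1
          omega
        rw [hpascal, h21]
        apply Nat.lt_of_mul_lt_mul_left (a := 2)
        calc 2 * ((Nat.choose n (t-1) + Nat.choose n t) * Nat.choose n (t-1))
            = (2 * Nat.choose n (t-1) + 2 * Nat.choose n t) * Nat.choose n (t-1) := by ring
        _ ≤ (2 * n^(t-1) + n^(t-1) * n) * n^(t-1) := by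
            apply Nat.mul_le_mul _ hb
            apply Nat.add_le_add
            · omega
            · rw [← hnt2]; exact ha
        _ = (2 + n) * (n^(t-1) * n^(t-1)) := by ring
        _ < (2 * n) * (n^(t-1) * n^(t-1)) := by
            apply Nat.mul_lt_mul_of_lt_of_le
            · omega
            · exact le_refl _
            · exact Nat.mul_pos hP1 hP1
        _ = 2 * (n^(t-1) * n^(t-1) * n) := by ring
      calc (n+1).choose t * (q^(2*t-2) * Nat.choose n (t-1))
          = q^(2*t-2) * ((n+1).choose t * Nat.choose n (t-1)) := by ring
      _ < q^(2*t-2) * n^(2*t-1) :=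
          Nat.mul_lt_mul_of_pos_left hkey (Nat.pow_pos (by omega))
    omega
end

section
/- Let q ≥ 3 and t ≥ 2 be fixed integers. For every ε > 0 there exists n_0 such that for all n ≥ n_0 there is a t-absorption correcting code C ⊆ Σ_q^n with |C| ≥ q^n / n^{(4t−1)+ε}; in other words, there exist t-absorption correcting codes of length n whose redundancy is at most (4t−1) log_q(n) + o(log_q(n)). -/
namespace AbsorbAux

/-! ### pattern machinery (insert t2 content here) -/

def applyG (op : ℕ → ℕ → ℕ) : List (ℕ × ℕ) → List ℕ → List ℕ
  | [], x => x
  | (g, v) :: P, x =>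
      x.take g ++ ((x.drop g).take (v + 2)).foldl op 0 :: applyG op P (x.drop (g + v + 2))

def Valid : List (ℕ × ℕ) → ℕ → Prop
  | [], _ => True
  | (g, v) :: P, m => g + v + 2 ≤ m ∧ Valid P (m - (g + v + 2))

def extG : List (ℕ × ℕ) → List ℕ → List ℕ
  | [], _ => []
  | (g, v) :: P, x => (x.drop g).take (v + 2) ++ extG P (x.drop (g + v + 2))

def invG : List (ℕ × ℕ) → List ℕ → List ℕ → List ℕ
  | [], y, _ => y
  | (g, v) :: P, y, e => y.take g ++ e.take (v + 2) ++ invG P (y.drop (g + 1)) (e.drop (v + 2))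

theorem forward {op : ℕ → ℕ → ℕ} {x y : List ℕ} {s : ℕ} (h : MergeBlocks op x y s) :
    ∃ P : List (ℕ × ℕ), y = applyG op P x ∧ (P.map (fun p => p.2 + 1)).sum = s ∧
      Valid P x.length := by
  induction h with
  | nil => exact ⟨[], rfl, rfl, trivial⟩
  | @keep a x0 y0 s0 h ih =>
      obtain ⟨P, hy, hs, hv⟩ := ih
      rcases P with _ | ⟨⟨g, v⟩, R⟩
      · exact ⟨[], by simp [applyG, hy], hs, trivial⟩
      · refine ⟨(g + 1, v) :: R, ?_, by simpa using hs, ?_⟩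
        · subst hy
          simp only [applyG, List.take_succ_cons, List.drop_succ_cons, List.cons_append]
          simp only [show g + 1 + v + 1 = g + v + 2 from by omega]
        · obtain ⟨h1, h2⟩ := hv
          refine ⟨by simp; omega, ?_⟩
          rw [show (a :: x0).length - (g + 1 + v + 2) = x0.length - (g + v + 2) from by
            simp; omega]
          exact h2
  | block b hb h ih =>
      obtain ⟨P, hy, hs, hv⟩ := ih
      have h2 : b.length - 2 + 2 = b.length := by omega
      refine ⟨(0, b.length - 2) :: P, ?_, ?_, ?_⟩
      · simp only [applyG, List.take_zero, List.drop_zero, List.nil_append, Nat.zero_add]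
        rw [h2, List.take_left, List.drop_left, hy]
      · simp only [List.map_cons, List.sum_cons]; omega
      · exact ⟨by simp [h2], by simpa [h2] using hv⟩

theorem take_app {α : Type*} {l1 l2 : List α} {g : ℕ} (h : l1.length = g) :
    (l1 ++ l2).take g = l1 := by subst h; exact List.take_left

theorem drop_app {α : Type*} {l1 l2 : List α} {g : ℕ} (h : l1.length = g) :
    (l1 ++ l2).drop g = l2 := by subst h; exact List.drop_left

theorem drop_app_succ {α : Type*} {l1 l2 : List α} {a : α} {g : ℕ} (h : l1.length = g) :
    (l1 ++ a :: l2).drop (g + 1) = l2 := by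
  rw [← List.drop_drop, drop_app h, List.drop_succ_cons, List.drop_zero]

theorem reconstruct (op : ℕ → ℕ → ℕ) :
    ∀ (P : List (ℕ × ℕ)) (x : List ℕ), Valid P x.length →
      ∀ r : List ℕ, invG P (applyG op P x) (extG P x ++ r) = x := by
  intro P
  induction P with
  | nil => intro x _ r; rfl
  | cons p P ih =>
      obtain ⟨g, v⟩ := p
      intro x hv r
      obtain ⟨h1, h2⟩ := hv
      have htg : (x.take g).length = g := by simp; omega
      have hblock : ((x.drop g).take (v + 2)).length = v + 2 := by simp; omega
      have hdd : (x.drop g).drop (v + 2) = x.drop (g + v + 2) := by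
        rw [List.drop_drop]; ring_nf
      simp only [invG, applyG, extG]
      simp only [List.append_assoc]
      rw [take_app htg, take_app hblock, drop_app_succ htg, drop_app hblock]
      rw [ih (x.drop (g + v + 2)) (by simpa using h2) r]
      rw [← hdd, List.take_append_drop, List.take_append_drop]

/-- length bound on extG -/
theorem extG_length : ∀ (P : List (ℕ × ℕ)) (x : List ℕ),
    (extG P x).length ≤ 2 * (P.map (fun p => p.2 + 1)).sum := by
  intro P
  induction P with
  | nil => intro x; simp [extG]
  | cons p P ih =>
      obtain ⟨g, v⟩ := p
      intro x
      simp only [extG, List.length_append, List.map_cons, List.sum_cons]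
      have := ih (x.drop (g + v + 2))
      have := List.length_take_le (v + 2) (x.drop g)
      omega


/-! ### extra small lemmas -/

theorem mergeSelf (op : ℕ → ℕ → ℕ) : ∀ l : List ℕ, MergeBlocks op l l 0
  | [] => .nil
  | a :: l => .keep a (mergeSelf op l)

theorem ball_nonempty (q t : ℕ) (x : List ℕ) : (absorbBall q t x).Nonempty := by
  refine ⟨x.take (x.length - t), t, le_refl t, ?_⟩
  simpa [Nat.sub_self] using mergeSelf (vplus q) (x.take (x.length - t))

theorem valid_bound : ∀ (P : List (ℕ × ℕ)) (m : ℕ), Valid P m → ∀ p ∈ P, p.1 ≤ m := by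
  intro P
  induction P with
  | nil => intro m _ p hp; simp at hp
  | cons a P ih =>
      obtain ⟨g, v⟩ := a
      intro m hv p hp
      obtain ⟨h1, h2⟩ := hv
      rcases List.mem_cons.mp hp with rfl | hp
      · omega
      · exact le_trans (ih _ h2 p hp) (Nat.sub_le _ _)

theorem length_le_mapsum : ∀ P : List (ℕ × ℕ), P.length ≤ (P.map (fun p => p.2 + 1)).sum := by
  intro P
  induction P with
  | nil => simp
  | cons a P ih => simp only [List.length_cons, List.map_cons, List.sum_cons]; omega

theorem extG_subset : ∀ (P : List (ℕ × ℕ)) (x : List ℕ), ∀ a ∈ extG P x, a ∈ x := by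
  intro P
  induction P with
  | nil => intro x a ha; simp [extG] at ha
  | cons p P ih =>
      obtain ⟨g, v⟩ := p
      intro x a ha
      rcases List.mem_append.mp ha with h | h
      · exact List.drop_subset g x (List.take_subset _ _ h)
      · exact List.drop_subset _ x (ih _ a h)

/-! ### listsLE and codeAll and greedy (insert t4 content here) -/

variable {α : Type*} [DecidableEq α]

/-- all lists of length ≤ L with entries in F. -/
def listsLE (F : Finset α) : ℕ → Finset (List α)
  | 0 => {[]}
  | L + 1 => {[]} ∪ (F ×ˢ listsLE F L).image (fun p => p.1 :: p.2)

theorem mem_listsLE {F : Finset α} : ∀ {L : ℕ} {l : List α}, l.length ≤ L →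
    (∀ a ∈ l, a ∈ F) → l ∈ listsLE F L := by
  intro L
  induction L with
  | zero => intro l h1 h2; rw [List.length_eq_zero_iff.mp (Nat.le_zero.mp h1)]; simp [listsLE]
  | succ L ih =>
      intro l h1 h2
      rcases l with _ | ⟨a, l⟩
      · simp [listsLE]
      · simp only [listsLE, Finset.mem_union, Finset.mem_image]
        right
        exact ⟨(a, l), Finset.mem_product.mpr ⟨h2 a (by simp),
          ih (by simpa using h1) (fun b hb => h2 b (by simp [hb]))⟩, rfl⟩

theorem card_listsLE (F : Finset α) : ∀ L : ℕ, (listsLE F L).card ≤ (F.card + 1) ^ L := by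
  intro L
  induction L with
  | zero => simp [listsLE]
  | succ L ih =>
      have h1 : (listsLE F (L + 1)).card ≤ 1 + F.card * (listsLE F L).card := by
        refine le_trans (Finset.card_union_le _ _) ?_
        have := Finset.card_image_le (s := F ×ˢ listsLE F L) (f := fun p => p.1 :: p.2)
        rw [Finset.card_product] at this
        simpa using this
      calc (listsLE F (L + 1)).card ≤ 1 + F.card * (listsLE F L).card := h1
        _ ≤ 1 + F.card * (F.card + 1) ^ L := by
            have := Nat.mul_le_mul_left F.card ih; omega
        _ ≤ (F.card + 1) ^ (L + 1) := by
            rw [pow_succ, Nat.mul_comm ((F.card+1)^L)]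
            have h2 : 1 ≤ (F.card + 1) ^ L := Nat.one_le_pow _ _ (by omega)
            calc 1 + F.card * (F.card + 1) ^ L ≤ (F.card+1)^L + F.card * (F.card+1)^L := by omega
              _ = (F.card + 1) * (F.card + 1) ^ L := by ring

def codeAll (q n : ℕ) : Finset (List ℕ) :=
  (Finset.univ : Finset (Fin n → Fin q)).image (fun f => (List.ofFn f).map Fin.val)

theorem card_codeAll (q n : ℕ) : (codeAll q n).card = q ^ n := by
  have hinj : Function.Injective (fun f : Fin n → Fin q => (List.ofFn f).map Fin.val) :=
    fun f g h => List.ofFn_injective ((List.map_injective_iff.mpr Fin.val_injective) h)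
  rw [codeAll, Finset.card_image_of_injective _ hinj, Finset.card_univ]
  simp

theorem mem_codeAll {q n : ℕ} {x : List ℕ} :
    x ∈ codeAll q n ↔ x.length = n ∧ ∀ a ∈ x, a < q := by
  constructor
  · intro hx
    simp only [codeAll, Finset.mem_image] at hx
    obtain ⟨f, _, rfl⟩ := hx
    constructor
    · simp
    · intro a ha
      simp only [List.mem_map] at ha
      obtain ⟨b, _, rfl⟩ := ha
      exact b.isLt
  · rintro ⟨h1, h2⟩
    simp only [codeAll, Finset.mem_image]
    refine ⟨fun i => ⟨x[i.val]'(by omega), h2 _ (List.getElem_mem _)⟩, Finset.mem_univ _, ?_⟩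
    apply List.ext_getElem
    · simp [h1]
    · intro i hi1 hi2
      simp [List.getElem_ofFn]

theorem greedy {α : Type*} [DecidableEq α] (R : α → α → Prop) [DecidableRel R]
    (hsym : ∀ a b, R a b → R b a) (hrefl : ∀ a, R a a) (D : ℕ) :
    ∀ (N : ℕ) (A : Finset α), A.card ≤ N →
      (∀ a ∈ A, (A.filter (fun b => R a b)).card ≤ D) →
      ∃ C : Finset α, C ⊆ A ∧ (∀ a ∈ C, ∀ b ∈ C, a ≠ b → ¬ R a b) ∧
        A.card ≤ C.card * D := by
  intro N
  induction N with
  | zero =>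
      intro A hA _
      exact ⟨∅, Finset.empty_subset _, by simp, by simpa using hA⟩
  | succ N ih =>
      intro A hA hdeg
      rcases A.eq_empty_or_nonempty with rfl | ⟨a, ha⟩
      · exact ⟨∅, Finset.empty_subset _, by simp, by simp⟩
      · set A' := A.filter (fun b => ¬ R a b) with hA'def
        have hsub : A' ⊆ A := Finset.filter_subset _ _
        have hcard : A'.card ≤ N := by
          have hlt : A'.card < A.card := by
            apply Finset.card_lt_card
            refine ⟨hsub, fun hcon => ?_⟩
            have := Finset.mem_filter.mp (hcon ha)
            exact this.2 (hrefl a)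
          omega
        obtain ⟨C', hC'sub, hC'pair, hC'card⟩ := ih A' hcard (fun b hb =>
          le_trans (Finset.card_le_card (Finset.filter_subset_filter _ hsub))
            (hdeg b (hsub hb)))
        have hanotin : a ∉ C' := fun hcon =>
          (Finset.mem_filter.mp (hC'sub hcon)).2 (hrefl a)
        refine ⟨insert a C', ?_, ?_, ?_⟩
        · intro b hb
          rcases Finset.mem_insert.mp hb with rfl | hb
          · exact ha
          · exact hsub (hC'sub hb)
        · intro b hb c hc hbc
          have hb' := Finset.mem_insert.mp hb
          have hc' := Finset.mem_insert.mp hc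
          rcases hb' with hb1 | hb1
          · rcases hc' with hc1 | hc1
            · exact absurd (hb1.trans hc1.symm) hbc
            · subst hb1; exact (Finset.mem_filter.mp (hC'sub hc1)).2
          · rcases hc' with hc1 | hc1
            · subst hc1
              exact fun hr => (Finset.mem_filter.mp (hC'sub hb1)).2 (hsym _ _ hr)
            · exact hC'pair b hb1 c hc1 hbc
        · rw [Finset.card_insert_of_notMem hanotin]
          have hpart := Finset.card_filter_add_card_filter_not
            (s := A) (p := fun b => R a b)
          have hD := hdeg a ha
          have : A.card ≤ D + A'.card := by rw [hA'def]; omega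
          calc A.card ≤ D + A'.card := this
            _ ≤ D + C'.card * D := by omega
            _ = (C'.card + 1) * D := by ring

/-! ### the encoding -/

def Spec (q t : ℕ) (x x' : List ℕ) (z : ℕ × List (ℕ × ℕ) × ℕ × List (ℕ × ℕ)) : Prop :=
  z.1 ≤ t ∧ (z.2.1.map (fun p => p.2 + 1)).sum = t - z.1 ∧
    Valid z.2.1 (x.take (x.length - z.1)).length ∧
  z.2.2.1 ≤ t ∧ (z.2.2.2.map (fun p => p.2 + 1)).sum = t - z.2.2.1 ∧
    Valid z.2.2.2 (x'.take (x'.length - z.2.2.1)).length ∧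
  applyG (vplus q) z.2.1 (x.take (x.length - z.1)) =
    applyG (vplus q) z.2.2.2 (x'.take (x'.length - z.2.2.1))

theorem spec_exists {q t : ℕ} {x x' : List ℕ}
    (h : (absorbBall q t x ∩ absorbBall q t x').Nonempty) :
    ∃ z, Spec q t x x' z := by
  obtain ⟨y, ⟨t1, ht1, hm1⟩, ⟨t2, ht2, hm2⟩⟩ := h
  obtain ⟨P1, hy1, hs1, hv1⟩ := forward hm1
  obtain ⟨P2, hy2, hs2, hv2⟩ := forward hm2
  exact ⟨(t1, P1, t2, P2), ht1, hs1, hv1, ht2, hs2, hv2, hy1.symm.trans hy2⟩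

noncomputable def enc (q t : ℕ) (x x' : List ℕ) :
    ℕ × List (ℕ × ℕ) × ℕ × List (ℕ × ℕ) × List ℕ := by
  classical
  exact if h : ∃ z, Spec q t x x' z then
    (h.choose.1, h.choose.2.1, h.choose.2.2.1, h.choose.2.2.2,
      extG h.choose.2.2.2 (x'.take (x'.length - h.choose.2.2.1)) ++
        x'.drop (x'.length - h.choose.2.2.1))
  else (0, [], 0, [], [])

def dec (q t : ℕ) (x : List ℕ) (w : ℕ × List (ℕ × ℕ) × ℕ × List (ℕ × ℕ) × List ℕ) :
    List ℕ :=
  let y := applyG (vplus q) w.2.1 (x.take (x.length - w.1))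
  let pre := invG w.2.2.2.1 y w.2.2.2.2
  pre ++ w.2.2.2.2.drop (extG w.2.2.2.1 pre).length

theorem dec_enc {q t : ℕ} {x x' : List ℕ}
    (h : (absorbBall q t x ∩ absorbBall q t x').Nonempty) :
    dec q t x (enc q t x x') = x' := by
  classical
  have hex : ∃ z, Spec q t x x' z := spec_exists h
  obtain ⟨h1, h2, h3, h4, h5, h6, h7⟩ := hex.choose_spec
  rw [enc]
  rw [dif_pos hex]
  set t2 := hex.choose.2.2.1
  set P2 := hex.choose.2.2.2
  set pre' := x'.take (x'.length - t2) with hpre'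
  have hrec : invG P2 (applyG (vplus q) P2 pre')
      (extG P2 pre' ++ x'.drop (x'.length - t2)) = pre' :=
    reconstruct (vplus q) P2 pre' h6 _
  simp only [dec]
  rw [← h7] at hrec
  rw [hrec, List.drop_left]
  exact List.take_append_drop _ x'

end AbsorbAux

/-- Theorem 6: for fixed `q ≥ 3` and `t ≥ 2`, for every `ε > 0` and all
sufficiently large `n` there is a `t`-absorption correcting code `C ⊆ Σ_q^n` with
`|C| ≥ q^n / n^{(4t-1)+ε}`, i.e. of redundancy at most `(4t-1) log_q n + o(log_q n)`. -/
theorem stmt14 (q t : ℕ) (hq : 3 ≤ q) (ht : 2 ≤ t) :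
    ∀ ε : ℝ, 0 < ε → ∃ n0 : ℕ, ∀ n : ℕ, n0 ≤ n →
      ∃ C : Set (List ℕ),
        (∀ x ∈ C, x.length = n ∧ ∀ a ∈ x, a < q) ∧
        (∀ x ∈ C, ∀ x' ∈ C, x ≠ x' → absorbBall q t x ∩ absorbBall q t x' = ∅) ∧
        (q : ℝ) ^ n / (n : ℝ) ^ ((4 * (t : ℝ) - 1) + ε) ≤ (C.ncard : ℝ) := by

  classical
  open AbsorbAux in
  intro ε hε
  set K := (t + 1) ^ 2 * (3 * t) ^ (2 * t) * (q + 1) ^ (3 * t) with hK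
  refine ⟨K + 1, fun n hn => ?_⟩
  have hn1 : 1 ≤ n := le_trans (Nat.le_add_left 1 K) hn
  have hnK : K ≤ n := le_trans (Nat.le_succ K) hn
  set A := codeAll q n with hA
  set R : List ℕ → List ℕ → Prop :=
    fun x x' => (absorbBall q t x ∩ absorbBall q t x').Nonempty with hR
  set PL := listsLE ((Finset.range (n + 1)) ×ˢ (Finset.range t)) t with hPL
  set EL := listsLE (Finset.range q) (3 * t) with hEL
  set T := (Finset.range (t + 1)) ×ˢ (PL ×ˢ ((Finset.range (t + 1)) ×ˢ (PL ×ˢ EL)))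
    with hT
  set D := (t + 1) ^ 2 * (((n + 1) * t + 1) ^ t) ^ 2 * (q + 1) ^ (3 * t) with hD
  -- cardinality of T
  have hPLcard : PL.card ≤ ((n + 1) * t + 1) ^ t := by
    have := card_listsLE ((Finset.range (n + 1)) ×ˢ (Finset.range t)) t
    rwa [Finset.card_product, Finset.card_range, Finset.card_range] at this
  have hELcard : EL.card ≤ (q + 1) ^ (3 * t) := by
    have := card_listsLE (Finset.range q) (3 * t)
    rwa [Finset.card_range] at this
  have hTcard : T.card ≤ D := by
    rw [hT]
    simp only [Finset.card_product, Finset.card_range]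
    calc (t + 1) * (PL.card * ((t + 1) * (PL.card * EL.card)))
        ≤ (t + 1) * (((n + 1) * t + 1) ^ t * ((t + 1) *
            (((n + 1) * t + 1) ^ t * ((q + 1) ^ (3 * t))))) := by
          apply Nat.mul_le_mul_left
          apply Nat.mul_le_mul hPLcard
          apply Nat.mul_le_mul_left
          exact Nat.mul_le_mul hPLcard hELcard
      _ = D := by rw [hD]; ring
  -- degree bound
  have hdeg : ∀ a ∈ A, (A.filter (fun b => R a b)).card ≤ D := by
    intro a ha
    obtain ⟨halen, haval⟩ := mem_codeAll.mp ha
    refine le_trans (Finset.card_le_card_of_injOn (enc q t a) ?_ ?_) hTcard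
    · -- maps to T
      intro b hb
      obtain ⟨hbA, hRb⟩ := Finset.mem_filter.mp hb
      obtain ⟨hblen, hbval⟩ := mem_codeAll.mp hbA
      have hex : ∃ z, Spec q t a b z := spec_exists hRb
      obtain ⟨h1, h2, h3, h4, h5, h6, h7⟩ := hex.choose_spec
      rw [enc, dif_pos hex]
      have hmemPL : ∀ (P : List (ℕ × ℕ)) (w : List ℕ) (s : ℕ), w.length ≤ n →
          (P.map (fun p => p.2 + 1)).sum = s → s ≤ t → Valid P w.length → P ∈ PL := by
        intro P w s hw hsum hst hval
        apply mem_listsLE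
        · calc P.length ≤ (P.map (fun p => p.2 + 1)).sum := length_le_mapsum P
            _ ≤ t := by omega
        · intro p hp
          rw [Finset.mem_product]
          constructor
          · rw [Finset.mem_range]
            have := valid_bound P w.length hval p hp
            omega
          · rw [Finset.mem_range]
            have hmem : p.2 + 1 ∈ P.map (fun p => p.2 + 1) := List.mem_map_of_mem hp
            have := List.single_le_sum (by intro x hx; omega) _ hmem
            omega
      rw [hT, Finset.mem_coe, Finset.mem_product]
      refine ⟨by dsimp only; rw [Finset.mem_range]; omega, ?_⟩
      rw [Finset.mem_product]
      refine ⟨hmemPL _ (a.take (a.length - hex.choose.1)) _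
        (by rw [List.length_take]; omega) h2 (by omega) h3, ?_⟩
      rw [Finset.mem_product]
      refine ⟨by dsimp only; rw [Finset.mem_range]; omega, ?_⟩
      rw [Finset.mem_product]
      refine ⟨hmemPL _ (b.take (b.length - hex.choose.2.2.1)) _
        (by rw [List.length_take]; omega) h5 (by omega) h6, ?_⟩
      -- E ∈ EL
      apply mem_listsLE
      · dsimp only
        rw [List.length_append, List.length_drop]
        have hext := extG_length hex.choose.2.2.2 (b.take (b.length - hex.choose.2.2.1))
        rw [h5] at hext
        omega
      · intro c hc
        rw [Finset.mem_range]
        rcases List.mem_append.mp hc with h | h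
        · exact hbval c (List.take_subset _ _ (extG_subset _ _ c h))
        · exact hbval c (List.drop_subset _ _ h)
    · -- injective
      intro b hb c hc hbc
      rw [Finset.mem_coe, Finset.mem_filter] at hb hc
      have eb := dec_enc (q := q) (t := t) (x := a) (x' := b) hb.2
      have ec := dec_enc (q := q) (t := t) (x := a) (x' := c) hc.2
      rw [← eb, ← ec, hbc]
  -- greedy
  have hsym : ∀ a b, R a b → R b a := by
    intro a b hab
    have hab' : (absorbBall q t a ∩ absorbBall q t b).Nonempty := hab
    show (absorbBall q t b ∩ absorbBall q t a).Nonempty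
    rwa [Set.inter_comm] at hab'
  have hrefl : ∀ a, R a a := by
    intro a
    show (absorbBall q t a ∩ absorbBall q t a).Nonempty
    rw [Set.inter_self]
    exact ball_nonempty q t a
  obtain ⟨Cf, hCsub, hCpair, hCcard⟩ :=
    greedy R hsym hrefl D A.card A (le_refl _) hdeg
  refine ⟨(↑Cf : Set (List ℕ)), ?_, ?_, ?_⟩
  · intro x hx
    exact mem_codeAll.mp (hCsub hx)
  · intro x hx x' hx' hne
    rw [← Set.not_nonempty_iff_eq_empty]
    exact hCpair x hx x' hx' hne
  · -- the cardinality bound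
    have hAcard : A.card = q ^ n := card_codeAll q n
    have hqn : q ^ n ≤ Cf.card * D := by rw [← hAcard]; exact hCcard
    -- D ≤ n ^ (4t - 1)
    have hb3 : (n + 1) * t + 1 ≤ 3 * t * n := by nlinarith
    have hDbound : D ≤ n ^ (4 * t - 1) := by
      have h1 : ((n + 1) * t + 1) ^ t ≤ (3 * t) ^ t * n ^ t := by
        calc ((n + 1) * t + 1) ^ t ≤ (3 * t * n) ^ t := Nat.pow_le_pow_left hb3 t
          _ = (3 * t) ^ t * n ^ t := mul_pow _ _ _
      have h2 : (((n + 1) * t + 1) ^ t) ^ 2 ≤ (3 * t) ^ (2 * t) * n ^ (2 * t) := by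
        calc (((n + 1) * t + 1) ^ t) ^ 2 ≤ ((3 * t) ^ t * n ^ t) ^ 2 :=
              Nat.pow_le_pow_left h1 2
          _ = (3 * t) ^ (2 * t) * n ^ (2 * t) := by
              rw [mul_pow, ← pow_mul, ← pow_mul, Nat.mul_comm t 2]
      calc D ≤ (t + 1) ^ 2 * ((3 * t) ^ (2 * t) * n ^ (2 * t)) * (q + 1) ^ (3 * t) := by
            rw [hD]
            exact Nat.mul_le_mul_right _ (Nat.mul_le_mul_left _ h2)
        _ = K * n ^ (2 * t) := by rw [hK]; ring
        _ ≤ n ^ (2 * t - 1) * n ^ (2 * t) := by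
            apply Nat.mul_le_mul_right
            calc K ≤ n := hnK
              _ ≤ n ^ (2 * t - 1) := Nat.le_self_pow (by omega) n
        _ = n ^ (4 * t - 1) := by rw [← pow_add]; congr 1; omega
    -- to the reals
    have hnR : (1 : ℝ) ≤ (n : ℝ) := by exact_mod_cast hn1
    have hDR : (D : ℝ) ≤ (n : ℝ) ^ ((4 * (t : ℝ) - 1) + ε) := by
      calc (D : ℝ) ≤ ((n ^ (4 * t - 1) : ℕ) : ℝ) := by exact_mod_cast hDbound
        _ = (n : ℝ) ^ (((4 * t - 1 : ℕ) : ℝ)) := by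
            rw [Real.rpow_natCast]; push_cast; ring
        _ ≤ (n : ℝ) ^ ((4 * (t : ℝ) - 1) + ε) := by
            apply Real.rpow_le_rpow_of_exponent_le hnR
            have : ((4 * t - 1 : ℕ) : ℝ) = 4 * (t : ℝ) - 1 := by
              have h4 : 1 ≤ 4 * t := by omega
              push_cast [h4]
              ring
            rw [this]
            linarith
    have hpos : (0 : ℝ) < (n : ℝ) ^ ((4 * (t : ℝ) - 1) + ε) :=
      Real.rpow_pos_of_pos (by linarith) _
    rw [Set.ncard_coe_finset, div_le_iff₀ hpos]
    calc (q : ℝ) ^ n = ((q ^ n : ℕ) : ℝ) := by push_cast; ring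
      _ ≤ ((Cf.card * D : ℕ) : ℝ) := by exact_mod_cast hqn
      _ = (Cf.card : ℝ) * (D : ℝ) := by push_cast; ring
      _ ≤ (Cf.card : ℝ) * (n : ℝ) ^ ((4 * (t : ℝ) - 1) + ε) := by
          apply mul_le_mul_of_nonneg_left hDR (by positivity)
end
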